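/- arXiv:2412.08576 — 9 statements merged into one kernel-verified Lean document; each statement's English description precedes it below -/
import Mathlib

section
/- If a proper cone K in R^d is contracted by a real matrix A (i.e., A maps K minus the origin into the interior of K) and a sequence of matrices A(n) converges to A, then there exists m such that for all n ≥ m, A(n) maps K into K. -/
/-! The unit sphere of `K` is compact and `A` maps it into the open set `interior K`, so by the
tube lemma every matrix close enough to `A` maps it into `interior K` as well. Since `K` is closed
under positive scaling, a linear map sending the unit sphere of `K` into `K` sends all of `K`
into `K`. -/

open Filter Topology Metric Matrix

theorem eventually_forall_mulVec_mem {ι : Type*} [Fintype ι] {S U : Set (ι → ℝ)}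
    (hS : IsCompact S) (hU : IsOpen U) {A : Matrix ι ι ℝ} (hA : ∀ x ∈ S, A *ᵥ x ∈ U) :
    ∀ᶠ B in 𝓝 A, ∀ x ∈ S, B *ᵥ x ∈ U :=
  hS.eventually_forall_of_forall_eventually fun x hx =>
    (continuous_fst.matrix_mulVec continuous_snd).continuousAt.preimage_mem_nhds
      (hU.mem_nhds (hA x hx))

theorem LinearMap.mapsTo_of_mapsTo_inter_unitSphere {E : Type*} [NormedAddCommGroup E]
    [NormedSpace ℝ E] {K : Set E} (hsmul : ∀ c : ℝ, 0 < c → ∀ x ∈ K, c • x ∈ K)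
    (f : E →ₗ[ℝ] E) (hf : Set.MapsTo f (K ∩ sphere 0 1) K) : Set.MapsTo f K K := by
  intro x hxK
  rcases eq_or_ne x 0 with rfl | hx
  · rwa [map_zero]
  have hnorm : 0 < ‖x‖ := norm_pos_iff.mpr hx
  have hunit : ‖x‖⁻¹ • x ∈ K ∩ sphere 0 1 :=
    ⟨hsmul _ (inv_pos.mpr hnorm) x hxK, by simp [norm_smul, hnorm.ne']⟩
  have hx_eq : x = ‖x‖ • ‖x‖⁻¹ • x := by rw [smul_smul, mul_inv_cancel₀ hnorm.ne', one_smul]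
  rw [hx_eq, map_smul]
  exact hsmul _ hnorm _ (hf hunit)

theorem stmt_0_general (d : ℕ) (K : Set (Fin d → ℝ))
    (hsmul : ∀ (c : ℝ), 0 < c → ∀ x ∈ K, c • x ∈ K)
    (hclosed : IsClosed K)
    (A : Matrix (Fin d) (Fin d) ℝ)
    (hcontract : ∀ x ∈ K, x ≠ 0 → A.mulVec x ∈ interior K)
    (Aseq : ℕ → Matrix (Fin d) (Fin d) ℝ)
    (hconv : Filter.Tendsto Aseq Filter.atTop (nhds A)) :
    ∃ m : ℕ, ∀ n ≥ m, ∀ x ∈ K, (Aseq n).mulVec x ∈ K := by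
  have hnear : ∀ᶠ B in 𝓝 A, ∀ x ∈ K ∩ sphere 0 1, B *ᵥ x ∈ interior K :=
    eventually_forall_mulVec_mem ((isCompact_sphere 0 1).inter_left hclosed) isOpen_interior
      fun x hx => hcontract x hx.1 (ne_zero_of_mem_unit_sphere ⟨x, hx.2⟩)
  obtain ⟨m, hm⟩ := eventually_atTop.mp (hconv.eventually hnear)
  exact ⟨m, fun n hn => (Aseq n).mulVecLin.mapsTo_of_mapsTo_inter_unitSphere hsmul
    fun _ hx => interior_subset (hm n hn _ hx)⟩

/-- If a proper cone `K` in `ℝ^d` is contracted by a matrix `A`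
(`A` maps `K \ {0}` into the interior of `K`) and a sequence of matrices
`Aseq n` converges to `A`, then eventually `Aseq n` maps `K` into `K`. -/
theorem stmt_0 (d : ℕ) (K : Set (Fin d → ℝ))
    (hadd : ∀ x ∈ K, ∀ y ∈ K, x + y ∈ K)
    (hsmul : ∀ (c : ℝ), 0 < c → ∀ x ∈ K, c • x ∈ K)
    (hclosed : IsClosed K)
    (hpointed : K ∩ (-K) ⊆ {0})
    (hsolid : (interior K).Nonempty)
    (A : Matrix (Fin d) (Fin d) ℝ)
    (hcontract : ∀ x ∈ K, x ≠ 0 → A.mulVec x ∈ interior K)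
    (Aseq : ℕ → Matrix (Fin d) (Fin d) ℝ)
    (hconv : Filter.Tendsto Aseq Filter.atTop (nhds A)) :
    ∃ m : ℕ, ∀ n ≥ m, ∀ x ∈ K, (Aseq n).mulVec x ∈ K :=
  stmt_0_general d K hsmul hclosed A hcontract Aseq hconv
end

section
/- For s ≥ 2, the Minkowski functional ‖·‖_{P_s} of the regular 2s-gon with vertices at the 2s-th roots of unity is a sub-multiplicative norm on C viewed as a real vector space: ‖yz‖_{P_s} ≤ ‖y‖_{P_s} · ‖z‖_{P_s} for all y, z ∈ C. -/
/-!
The vertices of `P_s` are exactly the `2s`-th roots of unity. They form a symmetric set that is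
closed under multiplication and, for `s ≥ 2`, spans `ℂ` over `ℝ`; hence `P_s` is a bounded,
balanced, convex neighbourhood of `0`, so its gauge is a norm, and `P_s * P_s ⊆ P_s`. For any
absorbent set `K` with `K * K ⊆ K` the gauge is submultiplicative: `x ∈ r • K` and `y ∈ d • K`
give `x * y ∈ (r * d) • K`.
-/

open Complex

/-- The regular `2s`-gon with vertices at the `2s`-th roots of unity. -/
noncomputable def regularPolygon (s : ℕ) : Set ℂ :=
  convexHull ℝ {w : ℂ | ∃ i : Fin (2 * s), w = Complex.exp (Real.pi * Complex.I * i / s)}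

open Set Pointwise Topology

section RealAlgebra

variable {A : Type*} [Ring A] [Algebra ℝ A] {K : Set A}

theorem gauge_mul_le_of_mem (hK : Absorbent ℝ K) (hmul : ∀ a ∈ K, ∀ b ∈ K, a * b ∈ K)
    {a : A} (ha : a ∈ K) (y : A) : gauge K (a * y) ≤ gauge K y :=
  csInf_le_csInf ⟨0, fun _ hr => hr.1.le⟩ hK.gauge_set_nonempty
    fun r ⟨hr, b, hb, hby⟩ => ⟨hr, a * b, hmul a ha b hb, by rw [← hby, mul_smul_comm]⟩

theorem gauge_mul_le (hK : Absorbent ℝ K) (hmul : ∀ a ∈ K, ∀ b ∈ K, a * b ∈ K) (x y : A) :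
    gauge K (x * y) ≤ gauge K x * gauge K y := by
  -- the right-hand side is the infimum of `gauge K y * r` over the `r > 0` with `x ∈ r • K`
  rw [mul_comm (gauge K x), ← smul_eq_mul (gauge K y), gauge_def (x := x),
    ← Real.sInf_smul_of_nonneg (gauge_nonneg y)]
  refine le_csInf (hK.gauge_set_nonempty.smul_set) ?_
  rintro _ ⟨r, ⟨hr, a, ha, rfl⟩, rfl⟩
  calc gauge K ((r • a) * y) = r * gauge K (a * y) := by
        rw [smul_mul_assoc, gauge_smul_of_nonneg hr.le, smul_eq_mul]
    _ ≤ r * gauge K y := mul_le_mul_of_nonneg_left (gauge_mul_le_of_mem hK hmul ha y) hr.le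
    _ = gauge K y • r := mul_comm _ _

theorem mul_mem_convexHull {S : Set A}
    (hS : ∀ a ∈ S, ∀ b ∈ S, a * b ∈ S) {x y : A} (hx : x ∈ convexHull ℝ S)
    (hy : y ∈ convexHull ℝ S) : x * y ∈ convexHull ℝ S := by
  have mulLeft_mem : ∀ a ∈ S, a * y ∈ convexHull ℝ S := by
    intro a ha
    have : a * y ∈ LinearMap.mulLeft ℝ a '' convexHull ℝ S := ⟨y, hy, rfl⟩
    rw [LinearMap.image_convexHull] at this
    exact convexHull_mono (image_subset_iff.2 fun b hb => hS a ha b hb) this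
  have : x * y ∈ LinearMap.mulRight ℝ y '' convexHull ℝ S := ⟨x, hx, rfl⟩
  rw [LinearMap.image_convexHull] at this
  exact convexHull_min (image_subset_iff.2 mulLeft_mem) (convex_convexHull ℝ S) this

end RealAlgebra

theorem Convex.mem_nhds_zero_of_span_eq_top {E : Type*} [NormedAddCommGroup E] [NormedSpace ℝ E]
    [FiniteDimensional ℝ E] {K : Set E} (hK : Convex ℝ K) (hneg : ∀ x ∈ K, -x ∈ K)
    (h0 : (0 : E) ∈ K) (hspan : Submodule.span ℝ K = ⊤) : K ∈ 𝓝 (0 : E) := by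
  have hvec : vectorSpan ℝ K = ⊤ :=
    eq_top_mono (Submodule.span_le.2 fun x hx => by simpa using vsub_mem_vectorSpan ℝ hx h0) hspan
  obtain ⟨x, hx⟩ := hK.interior_nonempty_iff_affineSpan_eq_top.2
    ((AffineSubspace.affineSpan_eq_top_iff_vectorSpan_eq_top_of_nonempty ℝ E E ⟨0, h0⟩).2 hvec)
  have hnx : -x ∈ interior K := by
    refine interior_maximal (fun y hy => ?_) isOpen_interior.neg (neg_mem_neg.2 hx)
    simpa using hneg _ (interior_subset hy)
  rw [← mem_interior_iff_mem_nhds]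
  simpa using hK.interior hx hnx (by norm_num : (0 : ℝ) ≤ 1 / 2) (by norm_num : (0 : ℝ) ≤ 1 / 2)
    (by norm_num)

theorem Complex.span_pair_one_eq_top_of_im_ne_zero {ζ : ℂ} (hζ : ζ.im ≠ 0) :
    Submodule.span ℝ {1, ζ} = ⊤ := by
  refine Submodule.eq_top_iff'.2 fun z => Submodule.mem_span_pair.2
    ⟨z.re - z.im / ζ.im * ζ.re, z.im / ζ.im, ?_⟩
  apply Complex.ext <;> simp [div_mul_cancel₀ _ hζ]

section RootsOfUnity

variable {n : ℕ}

theorem regularPolygon_eq_convexHull {s : ℕ} (hs : s ≠ 0) :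
    regularPolygon s = convexHull ℝ {w : ℂ | w ^ (2 * s) = 1} := by
  have : NeZero (2 * s) := ⟨by omega⟩
  have hζ := Complex.isPrimitiveRoot_exp (2 * s) (NeZero.ne _)
  have hvertex (i : ℕ) : exp (Real.pi * I * i / s) = exp (2 * Real.pi * I / ↑(2 * s)) ^ i := by
    rw [← Complex.exp_nat_mul]
    push_cast
    field_simp
  unfold regularPolygon
  congr 1
  ext w
  constructor
  · rintro ⟨i, rfl⟩
    rw [mem_ofPred_eq, hvertex, ← pow_mul, pow_mul', hζ.pow_eq_one, one_pow]
  · intro hw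
    obtain ⟨i, hi, rfl⟩ := hζ.eq_pow_of_pow_eq_one hw
    exact ⟨⟨i, hi⟩, (hvertex i).symm⟩

theorem mul_mem_convexHull_rootsOfUnity {x y : ℂ} (hx : x ∈ convexHull ℝ {w : ℂ | w ^ n = 1})
    (hy : y ∈ convexHull ℝ {w : ℂ | w ^ n = 1}) : x * y ∈ convexHull ℝ {w : ℂ | w ^ n = 1} :=
  mul_mem_convexHull (fun a ha b hb => by simp_all [mul_pow]) hx hy

theorem neg_mem_convexHull_rootsOfUnity (hn : Even n) {x : ℂ}
    (hx : x ∈ convexHull ℝ {w : ℂ | w ^ n = 1}) : -x ∈ convexHull ℝ {w : ℂ | w ^ n = 1} := by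
  have : -{w : ℂ | w ^ n = 1} ⊆ {w : ℂ | w ^ n = 1} := fun w hw => by
    simpa [hn.neg_pow] using hw
  exact convexHull_mono this (by rwa [convexHull_neg, neg_mem_neg])

theorem convexHull_rootsOfUnity_subset_closedBall (hn : n ≠ 0) :
    convexHull ℝ {w : ℂ | w ^ n = 1} ⊆ Metric.closedBall 0 1 :=
  convexHull_min (fun w hw => by simp [Complex.norm_eq_one_of_pow_eq_one hw hn])
    (convex_closedBall 0 1)

theorem span_rootsOfUnity_eq_top (hn : 3 ≤ n) :
    Submodule.span ℝ {w : ℂ | w ^ n = 1} = ⊤ := by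
  have hζ := Complex.isPrimitiveRoot_exp n (by omega)
  have him : (exp (2 * Real.pi * I / n)).im ≠ 0 := by
    have : 2 * Real.pi * I / n = ((2 * Real.pi / n : ℝ) : ℂ) * I := by push_cast; ring
    rw [this, Complex.exp_ofReal_mul_I_im]
    refine (Real.sin_pos_of_pos_of_lt_pi (by positivity) ?_).ne'
    rw [div_lt_iff₀ (by positivity)]
    have hn' : (3 : ℝ) ≤ n := by exact_mod_cast hn
    nlinarith [Real.pi_pos, mul_le_mul_of_nonneg_left hn' Real.pi_pos.le]
  refine eq_top_mono (Submodule.span_mono ?_) (Complex.span_pair_one_eq_top_of_im_ne_zero him)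
  simp [insert_subset_iff, hζ.pow_eq_one]

end RootsOfUnity

/-- For `s ≥ 2` the Minkowski functional of the regular `2s`-gon is a
sub-multiplicative norm on `ℂ` viewed as a real vector space. -/
theorem stmt_3 (s : ℕ) (hs : 2 ≤ s) :
    (∀ z : ℂ, gauge (regularPolygon s) z = 0 ↔ z = 0) ∧
    (∀ y z : ℂ, gauge (regularPolygon s) (y + z) ≤
      gauge (regularPolygon s) y + gauge (regularPolygon s) z) ∧
    (∀ (r : ℝ) (z : ℂ), gauge (regularPolygon s) ((r : ℂ) * z) =
      |r| * gauge (regularPolygon s) z) ∧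
    (∀ y z : ℂ, gauge (regularPolygon s) (y * z) ≤
      gauge (regularPolygon s) y * gauge (regularPolygon s) z) := by
  rw [regularPolygon_eq_convexHull (by omega)]
  set P := convexHull ℝ {w : ℂ | w ^ (2 * s) = 1}
  have hconv : Convex ℝ P := convex_convexHull ℝ _
  have hneg : ∀ x ∈ P, -x ∈ P := fun _ => neg_mem_convexHull_rootsOfUnity (even_two_mul s)
  have hbal : Balanced ℝ P := (balanced_iff_neg_mem hconv).2 hneg
  have hspan : Submodule.span ℝ P = ⊤ := eq_top_mono
    (Submodule.span_mono (subset_convexHull ℝ _)) (span_rootsOfUnity_eq_top (by omega))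
  have habs : Absorbent ℝ P := absorbent_nhds_zero <| hconv.mem_nhds_zero_of_span_eq_top hneg
    (hbal.zero_mem ⟨1, subset_convexHull ℝ _ (one_pow _)⟩) hspan
  have hbdd : Bornology.IsVonNBounded ℝ P := (NormedSpace.isVonNBounded_closedBall ℝ ℂ 1).subset
    (convexHull_rootsOfUnity_subset_closedBall (by omega))
  refine ⟨fun z => gauge_eq_zero habs hbdd, gauge_add_le hconv habs, fun r z => ?_,
    gauge_mul_le habs fun a ha b hb => mul_mem_convexHull_rootsOfUnity ha hb⟩
  rw [← real_smul, gauge_smul hbal, Real.norm_eq_abs]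
end

section
/- Let A be a real d×d matrix with a simple eigenvalue λ₁ > 0 such that every other eigenvalue λ satisfies |Re λ| + |Im λ| < λ₁. Suppose (V_{i,j}) is a real basis of R^d in which A acts as a block matrix: A V_{1,1} = λ₁ V_{1,1}, and for each Jordan-type block i ≥ 2, A V_{i,j} = λ_i V_{i,j} + ε V_{i,j−1} (with V_{i,0} := 0 convention, i.e., A V_{i,1} = λ_i V_{i,1}), where 0 < ε < λ₁ − (|Re λ_i| + |Im λ_i|) for all i ≠ 1. Then the cone L = { a_{1,1} V_{1,1} + Σ_{i≥2, j} a_{i,j} V_{i,j} : a_{1,1} ≥ ‖a_{i,j}‖₁ for all i,j, and a_{i,j} = conjugate of a_{p,q} whenever V_{i,j} is the conjugate of V_{p,q} } is contracted by A, i.e., A(L \ {0}) ⊆ L°. -/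
/-!
Write `c_p(x)` for the coordinates of `x` in the basis `V`. Then `L` is the cone
`‖c_p(x)‖₁ ≤ Re c₀(x)` for all `p`, where `c₀` is the coordinate along `V_{1,1}`, and `A` acts on
coordinates by `c_{i,j} ↦ λ_i c_{i,j} + ε c_{i,j+1}`. For `0 ≠ x ∈ L` we have `r = Re c₀(x) > 0`;
the coordinate `c₀` is multiplied by `λ₁`, and every other one gets `‖·‖₁ ≤ (‖λ_i‖₁ + ε) r < λ₁ r`.
So `A x` satisfies all defining inequalities strictly. Since `c₀` is real on real vectors (complex
conjugation fixes the dominant block), these strict inequalities cut out an open subset of `L`.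
-/

open Complex ComplexConjugate Matrix

namespace Complex

def l1Norm (z : ℂ) : ℝ := |z.re| + |z.im|

theorem l1Norm_nonneg (z : ℂ) : 0 ≤ l1Norm z := by
  unfold l1Norm; positivity

theorem l1Norm_pos {z : ℂ} (hz : z ≠ 0) : 0 < l1Norm z := by
  have hre := abs_nonneg z.re
  have him := abs_nonneg z.im
  by_contra! hle
  unfold l1Norm at hle
  exact hz (Complex.ext (abs_eq_zero.1 (by linarith)) (abs_eq_zero.1 (by linarith)))

theorem l1Norm_add_le (z w : ℂ) : l1Norm (z + w) ≤ l1Norm z + l1Norm w := by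
  simp only [l1Norm, add_re, add_im]
  linarith [abs_add_le z.re w.re, abs_add_le z.im w.im]

theorem l1Norm_mul_le (z w : ℂ) : l1Norm (z * w) ≤ l1Norm z * l1Norm w := by
  simp only [l1Norm, mul_re, mul_im]
  have hre : |z.re * w.re - z.im * w.im| ≤ |z.re| * |w.re| + |z.im| * |w.im| :=
    (abs_sub _ _).trans (by rw [abs_mul, abs_mul])
  have him : |z.re * w.im + z.im * w.re| ≤ |z.re| * |w.im| + |z.im| * |w.re| :=
    (abs_add_le _ _).trans (by rw [abs_mul, abs_mul])
  nlinarith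

theorem l1Norm_ofReal_mul (r : ℝ) (z : ℂ) : l1Norm (r * z) = |r| * l1Norm z := by
  simp only [l1Norm, re_ofReal_mul, im_ofReal_mul, abs_mul, mul_add]

theorem l1Norm_of_im_eq_zero {z : ℂ} (hz : z.im = 0) : l1Norm z = |z.re| := by
  simp [l1Norm, hz]

theorem continuous_l1Norm : Continuous l1Norm :=
  (continuous_abs.comp continuous_re).add (continuous_abs.comp continuous_im)

theorem l1Norm_sum_ite_le {ι : Type*} [Fintype ι] {P : ι → Prop} [DecidablePred P]
    (hP : ∀ a b, P a → P b → a = b) {c : ι → ℂ} {r : ℝ} (hc : ∀ i, l1Norm (c i) ≤ r)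
    (hr : 0 ≤ r) : l1Norm (∑ i, if P i then c i else 0) ≤ r := by
  by_cases h : ∃ i, P i
  · obtain ⟨i, hi⟩ := h
    rw [Finset.sum_eq_single i (fun j _ hj => if_neg fun hPj => hj (hP j i hPj hi))
      (by simp), if_pos hi]
    exact hc i
  · rw [Finset.sum_eq_zero fun i _ => if_neg (not_exists.1 h i)]
    simpa [l1Norm] using hr

theorem l1Norm_mul_add_mul_lt {lam z w : ℂ} {ε μ r : ℝ} (hz : l1Norm z ≤ r)
    (hw : l1Norm w ≤ r) (hr : 0 < r) (hε : 0 ≤ ε) (h : l1Norm lam + ε < μ) :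
    l1Norm (lam * z + ε * w) < μ * r :=
  calc l1Norm (lam * z + ε * w)
      ≤ l1Norm lam * l1Norm z + ε * l1Norm w := by
        grw [l1Norm_add_le, l1Norm_mul_le, l1Norm_ofReal_mul, abs_of_nonneg hε]
    _ ≤ (l1Norm lam + ε) * r := by
        rw [add_mul]; gcongr; exact l1Norm_nonneg lam
    _ < μ * r := by gcongr

end Complex

section RealCoords

variable {n ι : Type*} [Fintype ι] (B : Module.Basis ι ℂ (n → ℂ))

noncomputable def realCoords (y : n → ℝ) : ι → ℂ := B.equivFun fun t => (y t : ℂ)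

variable {B}

theorem ofReal_eq_sum_realCoords (y : n → ℝ) (t : n) :
    (y t : ℂ) = ∑ p, realCoords B y p * B p t := by
  have h := congrFun (B.sum_equivFun fun t => (y t : ℂ)) t
  rw [Finset.sum_apply] at h
  simpa only [Pi.smul_apply, smul_eq_mul, realCoords] using h.symm

theorem realCoords_eq_of_ofReal_eq_sum {y : n → ℝ} {c : ι → ℂ}
    (h : ∀ t, (y t : ℂ) = ∑ p, c p * B p t) : realCoords B y = c := by
  have hy : (fun t => (y t : ℂ)) = B.equivFun.symm c := by
    ext t; simp [h t, Module.Basis.equivFun_symm_apply]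
  rw [realCoords, hy, LinearEquiv.apply_symm_apply]

theorem eq_zero_of_realCoords_eq_zero {y : n → ℝ} (h : realCoords B y = 0) : y = 0 := by
  ext t
  simpa [h] using ofReal_eq_sum_realCoords (B := B) y t

theorem continuous_realCoords [Fintype n] : Continuous (realCoords B) :=
  B.equivFun.toLinearMap.continuous_of_finiteDimensional.comp
    (continuous_pi fun t => continuous_ofReal.comp (continuous_apply t))

theorem realCoords_mulVec [Fintype n] (A : Matrix n n ℝ) (y : n → ℝ) :
    realCoords B (A *ᵥ y) = B.equivFun (A.map ofReal *ᵥ fun t => (y t : ℂ)) := by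
  rw [realCoords]
  congr 1
  ext t
  exact RingHom.map_mulVec ofRealHom A y t

theorem realCoords_conj {τ : ι → ι} (hτ : ∀ p t, B (τ p) t = conj (B p t)) (y : n → ℝ)
    (p : ι) : realCoords B y (τ p) = conj (realCoords B y p) := by
  have hτinj : Function.Injective τ := fun p q hpq => B.injective <| funext fun t =>
    (starRingEnd ℂ).injective <| by rw [← hτ, ← hτ, hpq]
  let e := Equiv.ofBijective τ (Finite.injective_iff_bijective.1 hτinj)
  have he : ∀ p, e p = τ p := fun _ => rfl
  suffices realCoords B y = fun q => conj (realCoords B y (e.symm q)) by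
    rw [← he, congrFun this, e.symm_apply_apply]
  refine realCoords_eq_of_ofReal_eq_sum fun t => ?_
  calc (y t : ℂ) = conj (y t : ℂ) := (conj_ofReal _).symm
    _ = ∑ p, conj (realCoords B y p) * B (e p) t := by
        simp only [ofReal_eq_sum_realCoords (B := B) y t, map_sum, map_mul, he, hτ]
    _ = ∑ q, conj (realCoords B y (e.symm q)) * B q t :=
        Fintype.sum_equiv e _ _ fun p => by rw [e.symm_apply_apply]

end RealCoords

section JordanChain

variable {κ : Type*} {m : κ → ℕ}

theorem Sigma.fin_ext {p q : Σ i, Fin (m i)} (h₁ : p.1 = q.1) (h₂ : (p.2 : ℕ) = q.2) : p = q :=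
  Sigma.ext h₁ ((Fin.heq_ext_iff (congrArg m h₁)).2 h₂)

def IsChainSucc (q p : Σ i, Fin (m i)) : Prop := q.1 = p.1 ∧ (q.2 : ℕ) + 1 = p.2

instance [DecidableEq κ] (q p : Σ i, Fin (m i)) : Decidable (IsChainSucc q p) :=
  inferInstanceAs (Decidable (_ ∧ _))

theorem Sigma.eq_mk_zero_of_fst_eq {i : κ} (hm : m i = 1) {p : Σ i, Fin (m i)} (h : p.1 = i) :
    p = ⟨i, ⟨0, by omega⟩⟩ :=
  Sigma.fin_ext h (by have := p.2.isLt; have : m p.1 = 1 := h ▸ hm; dsimp only; omega)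

theorem not_isChainSucc_of_eq_one {q : Σ i, Fin (m i)} (hq : m q.1 = 1) (p : Σ i, Fin (m i)) :
    ¬ IsChainSucc q p := fun ⟨h₁, h₂⟩ => by
  have := p.2.isLt
  have : m p.1 = 1 := h₁ ▸ hq
  omega

theorem IsChainSucc.right_unique {q p p' : Σ i, Fin (m i)} (h : IsChainSucc q p)
    (h' : IsChainSucc q p') : p = p' :=
  Sigma.fin_ext (h.1.symm.trans h'.1) (h.2.symm.trans h'.2)

theorem IsChainSucc.left_unique {q q' p : Σ i, Fin (m i)} (h : IsChainSucc q p)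
    (h' : IsChainSucc q' p) : q = q' :=
  Sigma.fin_ext (h.1.trans h'.1.symm) (by have := h.2; have := h'.2; omega)

theorem dite_pred_eq_sum_isChainSucc [Fintype κ] [DecidableEq κ] {M : Type*} [AddCommMonoid M]
    (f : (Σ i, Fin (m i)) → M) (i : κ) (j : Fin (m i)) :
    (if _h : (j : ℕ) = 0 then 0
      else f ⟨i, ⟨(j : ℕ) - 1, lt_of_le_of_lt (Nat.sub_le _ _) j.isLt⟩⟩) =
      ∑ q, if IsChainSucc q ⟨i, j⟩ then f q else 0 := by
  split_ifs with hj
  · refine (Finset.sum_eq_zero fun q _ => if_neg fun hq => ?_).symm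
    have h := hq.2
    dsimp only at h
    omega
  · have hpred : IsChainSucc ⟨i, ⟨(j : ℕ) - 1, lt_of_le_of_lt (Nat.sub_le _ _) j.isLt⟩⟩ ⟨i, j⟩ :=
      ⟨rfl, by dsimp only; omega⟩
    rw [Finset.sum_eq_single _ (fun q _ hq => if_neg fun h => hq (h.left_unique hpred))
      (by simp), if_pos hpred]

theorem realCoords_mulVec_of_jordan {n : Type*} [Fintype n] [Fintype κ] [DecidableEq κ]
    (B : Module.Basis (Σ i, Fin (m i)) ℂ (n → ℂ)) (A : Matrix n n ℝ) (lam : κ → ℂ) (ε : ℝ)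
    (hA : ∀ i j, A.map ofReal *ᵥ B ⟨i, j⟩ = lam i • B ⟨i, j⟩ +
      if _h : (j : ℕ) = 0 then 0
      else (ε : ℂ) • B ⟨i, ⟨(j : ℕ) - 1, lt_of_le_of_lt (Nat.sub_le _ _) j.isLt⟩⟩)
    (y : n → ℝ) (q : Σ i, Fin (m i)) :
    realCoords B (A *ᵥ y) q = lam q.1 * realCoords B y q +
      ε * ∑ p, if IsChainSucc q p then realCoords B y p else 0 := by
  set c := realCoords B y
  have hAB : ∀ p, A.map ofReal *ᵥ B p =
      lam p.1 • B p + ∑ q, if IsChainSucc q p then (ε : ℂ) • B q else 0 := fun ⟨i, j⟩ => by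
    rw [hA, dite_pred_eq_sum_isChainSucc (fun q => (ε : ℂ) • B q)]
  have hexp : (A.map ofReal *ᵥ fun t => (y t : ℂ)) = ∑ q, (lam q.1 * c q +
      ε * ∑ p, if IsChainSucc q p then c p else 0) • B q := by
    calc (A.map ofReal *ᵥ fun t => (y t : ℂ)) = A.map ofReal *ᵥ ∑ p, c p • B p := by
          exact congrArg _ (B.sum_equivFun _).symm
      _ = ∑ p, c p • (lam p.1 • B p + ∑ q, if IsChainSucc q p then (ε : ℂ) • B q else 0) := by
          simp only [mulVec_sum, mulVec_smul, hAB]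
      _ = _ := by
          simp only [smul_add, Finset.sum_add_distrib, add_smul, Finset.smul_sum, Finset.sum_smul,
            smul_ite, ite_smul, smul_zero, zero_smul, smul_smul, Finset.mul_sum, mul_ite, mul_zero]
          rw [Finset.sum_comm (f := fun p q => if IsChainSucc q p then _ else _)]
          simp only [mul_comm]
  rw [realCoords_mulVec, hexp, ← B.equivFun_symm_apply, LinearEquiv.apply_symm_apply]

end JordanChain

section L1Cone

variable {n ι : Type*} [Fintype ι] {B : Module.Basis ι ℂ (n → ℂ)} {z₀ : ι}

variable (B z₀) in
def l1Cone : Set (n → ℝ) :=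
  {y | ∀ p, l1Norm (realCoords B y p) ≤ (realCoords B y z₀).re}

theorem re_pos_of_mem_l1Cone {x : n → ℝ} (hx : x ∈ l1Cone B z₀) (hx0 : x ≠ 0) :
    0 < (realCoords B x z₀).re := by
  obtain ⟨p, hp⟩ : ∃ p, realCoords B x p ≠ 0 := by
    by_contra! h
    exact hx0 (eq_zero_of_realCoords_eq_zero (funext h))
  exact (l1Norm_pos hp).trans_le (hx p)

theorem mem_interior_l1Cone [Fintype n] (hreal : ∀ y, (realCoords B y z₀).im = 0) {y : n → ℝ}
    (hpos : 0 < (realCoords B y z₀).re)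
    (hlt : ∀ p ≠ z₀, l1Norm (realCoords B y p) < (realCoords B y z₀).re) :
    y ∈ interior (l1Cone B z₀) := by
  have hcont : ∀ p, Continuous fun y => realCoords B y p := fun p =>
    (continuous_apply p).comp continuous_realCoords
  have hre : ContinuousAt (fun y => (realCoords B y z₀).re) y :=
    (continuous_re.comp (hcont z₀)).continuousAt
  rw [mem_interior_iff_mem_nhds]
  refine Filter.eventually_all.2 fun p => ?_
  by_cases hp : p = z₀
  · subst hp
    filter_upwards [continuousAt_const.eventually_lt hre hpos] with y' hy'
    rw [l1Norm_of_im_eq_zero (hreal y'), abs_of_pos hy']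
  · exact ((continuous_l1Norm.comp (hcont p)).continuousAt.eventually_lt hre
      (hlt p hp)).mono fun _ => le_of_lt

end L1Cone

theorem mulVec_mem_interior_l1Cone_of_jordan {κ n : Type*} [Fintype κ] [DecidableEq κ]
    [Fintype n] {m : κ → ℕ} {B : Module.Basis (Σ i, Fin (m i)) ℂ (n → ℂ)} {A : Matrix n n ℝ}
    {lam : κ → ℂ} {μ ε : ℝ}
    (hA : ∀ i j, A.map ofReal *ᵥ B ⟨i, j⟩ = lam i • B ⟨i, j⟩ +
      if _h : (j : ℕ) = 0 then 0
      else (ε : ℂ) • B ⟨i, ⟨(j : ℕ) - 1, lt_of_le_of_lt (Nat.sub_le _ _) j.isLt⟩⟩)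
    (hε : 0 ≤ ε) (hμ : 0 < μ) {z₀ : Σ i, Fin (m i)} (hz₀ : lam z₀.1 = μ)
    (hlast : ∀ q, ¬ IsChainSucc z₀ q) (hgap : ∀ p ≠ z₀, l1Norm (lam p.1) + ε < μ)
    (hreal : ∀ y, (realCoords B y z₀).im = 0) {x : n → ℝ} (hx : x ∈ l1Cone B z₀)
    (hx0 : x ≠ 0) : A *ᵥ x ∈ interior (l1Cone B z₀) := by
  have hr := re_pos_of_mem_l1Cone hx hx0
  have hAz₀ : (realCoords B (A *ᵥ x) z₀).re = μ * (realCoords B x z₀).re := by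
    simp [realCoords_mulVec_of_jordan B A lam ε hA, hz₀, hlast]
  refine mem_interior_l1Cone hreal (hAz₀ ▸ mul_pos hμ hr) fun p hp => ?_
  rw [hAz₀, realCoords_mulVec_of_jordan B A lam ε hA]
  exact l1Norm_mul_add_mul_lt (hx p) (l1Norm_sum_ite_le (fun _ _ => IsChainSucc.right_unique)
    hx hr.le) hr hε (hgap p hp)

theorem realCoords_sigma_conj {κ n : Type*} [Fintype κ] {m : κ → ℕ}
    {B : Module.Basis (Σ i, Fin (m i)) ℂ (n → ℂ)} {σ : κ → κ} (hσm : ∀ i, m (σ i) = m i)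
    (hσB : ∀ i j, B ⟨σ i, Fin.cast (hσm i).symm j⟩ = fun t => conj (B ⟨i, j⟩ t))
    (y : n → ℝ) (i : κ) (j : Fin (m i)) :
    realCoords B y ⟨σ i, Fin.cast (hσm i).symm j⟩ = conj (realCoords B y ⟨i, j⟩) :=
  realCoords_conj (τ := fun p => (⟨σ p.1, Fin.cast (hσm p.1).symm p.2⟩ : Σ i, Fin (m i)))
    (fun p t => congrFun (hσB p.1 p.2) t) y ⟨i, j⟩

theorem realCoords_im_eq_zero_of_sigma_conj {κ n : Type*} [Fintype κ] {m : κ → ℕ}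
    {B : Module.Basis (Σ i, Fin (m i)) ℂ (n → ℂ)} {σ : κ → κ} (hσm : ∀ i, m (σ i) = m i)
    (hσB : ∀ i j, B ⟨σ i, Fin.cast (hσm i).symm j⟩ = fun t => conj (B ⟨i, j⟩ t))
    {i₀ : κ} (hσ₀ : σ i₀ = i₀) (y : n → ℝ) (j : Fin (m i₀)) :
    (realCoords B y ⟨i₀, j⟩).im = 0 := by
  have h := realCoords_sigma_conj hσm hσB y i₀ j
  rw [Sigma.fin_ext (p := ⟨σ i₀, Fin.cast (hσm i₀).symm j⟩) (q := ⟨i₀, j⟩) hσ₀ rfl] at h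
  exact conj_eq_iff_im.1 h.symm

theorem setOf_coeffs_eq_l1Cone {κ n : Type*} [Fintype κ] {m : κ → ℕ}
    (B : Module.Basis (Σ i, Fin (m i)) ℂ (n → ℂ)) (σ : κ → κ) (hσm : ∀ i, m (σ i) = m i)
    (hσB : ∀ i j, B ⟨σ i, Fin.cast (hσm i).symm j⟩ = fun t => conj (B ⟨i, j⟩ t))
    {i₀ : κ} (hm₀ : m i₀ = 1) :
    {x : n → ℝ | ∃ a : (i : κ) → Fin (m i) → ℂ,
      (∀ i j, a (σ i) (Fin.cast (hσm i).symm j) = conj (a i j)) ∧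
      (∀ i j (j₀ : Fin (m i₀)), l1Norm (a i j) ≤ (a i₀ j₀).re) ∧
      ∀ t, (x t : ℂ) = ∑ i, ∑ j, a i j * B ⟨i, j⟩ t} = l1Cone B ⟨i₀, ⟨0, by omega⟩⟩ := by
  ext y
  constructor
  · rintro ⟨a, -, hbound, hsum⟩ p
    have hc : realCoords B y = fun p => a p.1 p.2 :=
      realCoords_eq_of_ofReal_eq_sum fun t => by rw [hsum t, Fintype.sum_sigma]
    rw [hc]
    exact hbound p.1 p.2 _
  · intro hy
    refine ⟨fun i j => realCoords B y ⟨i, j⟩,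
      fun i j => realCoords_sigma_conj hσm hσB y i j,
      fun i j j₀ => ?_,
      fun t => by rw [ofReal_eq_sum_realCoords (B := B) y t, Fintype.sum_sigma]⟩
    rw [← Sigma.eq_mk_zero_of_fst_eq (p := ⟨i₀, j₀⟩) hm₀ rfl] at hy
    exact hy ⟨i, j⟩

theorem stmt_4_general (d k : ℕ) (hk : 0 < k) (m : Fin k → ℕ) (hm0 : m ⟨0, hk⟩ = 1)
    (hcard : ∑ i, m i = d)
    (A : Matrix (Fin d) (Fin d) ℝ)
    (lam : Fin k → ℂ) (lam1 : ℝ) (hlam1 : lam ⟨0, hk⟩ = (lam1 : ℂ)) (hlam1pos : 0 < lam1)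
    (ε : ℝ) (hε : 0 < ε)
    (hε2 : ∀ i : Fin k, i ≠ ⟨0, hk⟩ → ε < lam1 - (|(lam i).re| + |(lam i).im|))
    (V : (i : Fin k) → Fin (m i) → (Fin d → ℂ))
    (hbasis : LinearIndependent ℂ (fun p : Σ i : Fin k, Fin (m i) => V p.1 p.2))
    (hAV : ∀ (i : Fin k) (j : Fin (m i)),
      (A.map (Complex.ofReal)).mulVec (V i j) =
        lam i • V i j +
          if h : (j : ℕ) = 0 then 0
          else (ε : ℂ) • V i ⟨(j : ℕ) - 1, lt_of_le_of_lt (Nat.sub_le _ _) j.isLt⟩)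
    (σ : Fin k → Fin k) (hσm : ∀ i, m (σ i) = m i)
    (hσlam : ∀ i, lam (σ i) = (starRingEnd ℂ) (lam i))
    (hσV : ∀ (i : Fin k) (j : Fin (m i)),
      V (σ i) (Fin.cast (hσm i).symm j) = fun t => (starRingEnd ℂ) (V i j t))
    (L : Set (Fin d → ℝ))
    (hL : L = {x : Fin d → ℝ | ∃ a : (i : Fin k) → Fin (m i) → ℂ,
      (∀ (i : Fin k) (j : Fin (m i)),
        a (σ i) (Fin.cast (hσm i).symm j) = (starRingEnd ℂ) (a i j)) ∧
      (∀ (i : Fin k) (j : Fin (m i)) (j0 : Fin (m ⟨0, hk⟩)),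
        |(a i j).re| + |(a i j).im| ≤ (a ⟨0, hk⟩ j0).re) ∧
      (∀ t : Fin d, (x t : ℂ) = ∑ i : Fin k, ∑ j : Fin (m i), a i j * V i j t)}) :
    ∀ x ∈ L, x ≠ 0 → A.mulVec x ∈ interior L := by
  set i₀ : Fin k := ⟨0, hk⟩
  set z₀ : Σ i, Fin (m i) := ⟨i₀, ⟨0, by omega⟩⟩
  have : Nonempty (Σ i, Fin (m i)) := ⟨z₀⟩
  obtain ⟨B, hB⟩ : ∃ B : Module.Basis (Σ i, Fin (m i)) ℂ (Fin d → ℂ), ∀ i j, B ⟨i, j⟩ = V i j :=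
    ⟨basisOfLinearIndependentOfCardEqFinrank hbasis (by simp [hcard]), fun i j => by simp⟩
  simp only [← hB] at hAV hσV hL
  have hσ₀ : σ i₀ = i₀ := by
    by_contra h
    have := hε2 _ h
    simp [hσlam, hlam1, abs_of_pos hlam1pos] at this
    linarith
  have hgap : ∀ p ≠ z₀, l1Norm (lam p.1) + ε < lam1 := fun p hp => by
    have := hε2 p.1 fun h => hp (Sigma.eq_mk_zero_of_fst_eq hm0 h)
    unfold l1Norm
    linarith
  rw [hL.trans (setOf_coeffs_eq_l1Cone B σ hσm hσV hm0)]
  exact fun x hx hx0 =>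
    mulVec_mem_interior_l1Cone_of_jordan hAV hε.le hlam1pos hlam1 (not_isChainSucc_of_eq_one hm0)
      hgap (fun y => realCoords_im_eq_zero_of_sigma_conj hσm hσV hσ₀ y _) hx hx0

/-- The polyhedral cone `L(V_{i,j})` built from an ε-Jordan basis, using the
1-norm `‖z‖₁ = |Re z| + |Im z|`, is contracted by `A` when every non-dominant
eigenvalue `λ_i` satisfies `‖λ_i‖₁ < λ₁` and `0 < ε < λ₁ - ‖λ_i‖₁`. -/
theorem stmt_4 (d k : ℕ) (hk : 0 < k) (m : Fin k → ℕ) (hm0 : m ⟨0, hk⟩ = 1)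
    (hcard : ∑ i, m i = d)
    (A : Matrix (Fin d) (Fin d) ℝ)
    (lam : Fin k → ℂ) (lam1 : ℝ) (hlam1 : lam ⟨0, hk⟩ = (lam1 : ℂ)) (hlam1pos : 0 < lam1)
    (ε : ℝ) (hε : 0 < ε)
    (hdom : ∀ i : Fin k, i ≠ ⟨0, hk⟩ → |(lam i).re| + |(lam i).im| < lam1)
    (hε2 : ∀ i : Fin k, i ≠ ⟨0, hk⟩ → ε < lam1 - (|(lam i).re| + |(lam i).im|))
    (V : (i : Fin k) → Fin (m i) → (Fin d → ℂ))
    (hbasis : LinearIndependent ℂ (fun p : Σ i : Fin k, Fin (m i) => V p.1 p.2))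
    (hAV : ∀ (i : Fin k) (j : Fin (m i)),
      (A.map (Complex.ofReal)).mulVec (V i j) =
        lam i • V i j +
          if h : (j : ℕ) = 0 then 0
          else (ε : ℂ) • V i ⟨(j : ℕ) - 1, lt_of_le_of_lt (Nat.sub_le _ _) j.isLt⟩)
    (σ : Fin k → Fin k) (hσm : ∀ i, m (σ i) = m i)
    (hσlam : ∀ i, lam (σ i) = (starRingEnd ℂ) (lam i))
    (hσV : ∀ (i : Fin k) (j : Fin (m i)),
      V (σ i) (Fin.cast (hσm i).symm j) = fun t => (starRingEnd ℂ) (V i j t))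
    (L : Set (Fin d → ℝ))
    (hL : L = {x : Fin d → ℝ | ∃ a : (i : Fin k) → Fin (m i) → ℂ,
      (∀ (i : Fin k) (j : Fin (m i)),
        a (σ i) (Fin.cast (hσm i).symm j) = (starRingEnd ℂ) (a i j)) ∧
      (∀ (i : Fin k) (j : Fin (m i)) (j0 : Fin (m ⟨0, hk⟩)),
        |(a i j).re| + |(a i j).im| ≤ (a ⟨0, hk⟩ j0).re) ∧
      (∀ t : Fin d, (x t : ℂ) = ∑ i : Fin k, ∑ j : Fin (m i), a i j * V i j t)}) :
    ∀ x ∈ L, x ≠ 0 → A.mulVec x ∈ interior L :=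
  stmt_4_general d k hk m hm0 hcard A lam lam1 hlam1 hlam1pos ε hε hε2 V hbasis hAV σ hσm hσlam hσV
    L hL
end

section
/- Let K be a proper cone in R^d and A a matrix contracting K, with unique (up to positive scalar) eigenvector v ∈ K° having all coordinates nonzero. Then for m sufficiently large, the cone A^m K is contained in the closed orthant determined by the signs of the coordinates of v (i.e., the set of x ∈ R^d with x_i ≥ 0 when v_i > 0 and x_i ≤ 0 when v_i < 0). -/
/-!
The sets `Aʲ K ∩ S`, with `S` the unit sphere, are compact (they are the images of the compact
set `K ∩ S` under `x ↦ Aʲx / ‖Aʲx‖`, which is defined because `A` never kills a nonzero point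
of `K`) and decreasing, and by Tam–Schneider their intersection is the single point `v / ‖v‖`.
This point lies in the open orthant `{y | ∀ i, 0 < yᵢ vᵢ}`, so some `Aᵐ K ∩ S`, and then all
later ones, lie in that orthant; since the orthant is a cone, so does `Aᵐ K \ {0}`.
-/

open Set Metric Filter Topology

theorem Set.mapsTo_diff_zero_of_mapsTo_interior {X : Type*} [TopologicalSpace X] [Zero X]
    {K : Set X} {f : X → X} (h0 : (0 : X) ∉ interior K)
    (hf : ∀ x ∈ K, x ≠ 0 → f x ∈ interior K) :
    MapsTo f (K \ {0}) (K \ {0}) :=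
  fun x hx => ⟨interior_subset (hf x hx.1 hx.2), fun h => h0 (h ▸ hf x hx.1 hx.2)⟩


section

variable {ι : Type*} {v : ι → ℝ}

def openOrthant (v : ι → ℝ) : Set (ι → ℝ) := {y | ∀ i, 0 < y i * v i}

theorem isOpen_openOrthant [Finite ι] : IsOpen (openOrthant v) := by
  simp only [openOrthant, ofPred_forall]
  exact isOpen_iInter_of_finite fun i => isOpen_lt continuous_const (by fun_prop)

theorem self_mem_openOrthant (hv : ∀ i, v i ≠ 0) : v ∈ openOrthant v :=
  fun i => mul_self_pos.mpr (hv i)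

theorem smul_mem_openOrthant {c : ℝ} (hc : 0 < c) {y : ι → ℝ} (hy : y ∈ openOrthant v) :
    c • y ∈ openOrthant v := fun i => by
  simpa [mul_assoc] using mul_pos hc (hy i)

end

section

variable {E F : Type*} [NormedAddCommGroup E] [NormedSpace ℝ E]
  [NormedAddCommGroup F] [NormedSpace ℝ F] {K : Set E}

theorem zero_notMem_interior_of_inter_neg_subset [Nontrivial E] (hK : K ∩ -K ⊆ {0}) :
    (0 : E) ∉ interior K := by
  intro h0
  have hK0 : K ∈ 𝓝 0 := mem_interior_iff_mem_nhds.mp h0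
  have : ({0} : Set E) ∈ 𝓝 0 := mem_of_superset (inter_mem hK0 (neg_mem_nhds_zero E hK0)) hK
  simpa [interior_singleton] using mem_interior_iff_mem_nhds.mpr this

theorem LinearMap.image_inter_sphere_eq (g : E →ₗ[ℝ] F)
    (hsmul : ∀ c : ℝ, 0 < c → ∀ x ∈ K, c • x ∈ K) (hg : ∀ x ∈ K, x ≠ 0 → g x ≠ 0) :
    g '' K ∩ sphere 0 1 = (fun x => ‖g x‖⁻¹ • g x) '' (K ∩ sphere 0 1) := by
  ext y
  constructor
  · rintro ⟨⟨x, hx, rfl⟩, hy⟩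
    have hx0 : x ≠ 0 := by rintro rfl; simp at hy
    refine ⟨‖x‖⁻¹ • x,
      ⟨hsmul _ (by positivity) x hx, mem_sphere_zero_iff_norm.mpr (norm_smul_inv_norm hx0)⟩, ?_⟩
    simp only [map_smul, norm_smul, norm_inv, norm_norm, mem_sphere_zero_iff_norm.mp hy, mul_one,
      inv_inv, smul_inv_smul₀ (norm_ne_zero_iff.mpr hx0)]
  · rintro ⟨x, ⟨hx, hx1⟩, rfl⟩
    have hx0 : x ≠ 0 := by rintro rfl; simp at hx1
    exact ⟨⟨‖g x‖⁻¹ • x, hsmul _ (by have := hg x hx hx0; positivity) x hx, by simp⟩,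
      mem_sphere_zero_iff_norm.mpr (norm_smul_inv_norm (hg x hx hx0))⟩

theorem LinearMap.isCompact_image_inter_sphere [FiniteDimensional ℝ E] (g : E →ₗ[ℝ] F)
    (hK : IsClosed K) (hsmul : ∀ c : ℝ, 0 < c → ∀ x ∈ K, c • x ∈ K)
    (hg : ∀ x ∈ K, x ≠ 0 → g x ≠ 0) : IsCompact (g '' K ∩ sphere 0 1) := by
  rw [g.image_inter_sphere_eq hsmul hg]
  refine ((isCompact_sphere 0 1).inter_left hK).image_of_continuousOn ?_
  have hgc := g.continuous_of_finiteDimensional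
  refine ContinuousOn.smul (ContinuousOn.inv₀ (by fun_prop) fun x hx => ?_) (by fun_prop)
  exact norm_ne_zero_iff.mpr (hg x hx.1 (ne_zero_of_mem_unit_sphere ⟨x, hx.2⟩))

theorem Module.End.antitone_image_pow (f : Module.End ℝ E) (hf : MapsTo f K K) :
    Antitone fun j => ⇑(f ^ j) '' K := by
  refine antitone_nat_of_succ_le fun j => ?_
  rw [pow_succ, Module.End.coe_mul, image_comp]
  exact image_mono (image_subset_iff.mpr hf)

theorem Module.End.exists_image_pow_inter_sphere_subset [FiniteDimensional ℝ E]
    (f : Module.End ℝ E) (hK : IsClosed K) (hsmul : ∀ c : ℝ, 0 < c → ∀ x ∈ K, c • x ∈ K)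
    (h0 : (0 : E) ∈ K) (hf : MapsTo f (K \ {0}) (K \ {0}))
    {U : Set E} (hU : IsOpen U) (hKU : (⋂ j, ⇑(f ^ j) '' K) ∩ sphere 0 1 ⊆ U) :
    ∃ m₀, ∀ m ≥ m₀, ⇑(f ^ m) '' K ∩ sphere 0 1 ⊆ U := by
  have hfK : MapsTo f K K := fun x hx => by
    rcases eq_or_ne x 0 with rfl | hx0
    · simpa using h0
    · exact (hf ⟨hx, hx0⟩).1
  have hf0 (j : ℕ) : MapsTo ⇑(f ^ j) (K \ {0}) (K \ {0}) := by
    rw [Module.End.coe_pow]; exact hf.iterate j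
  have hanti : Antitone fun j => ⇑(f ^ j) '' K ∩ sphere 0 1 :=
    fun i j hij => inter_subset_inter_left _ (f.antitone_image_pow hfK hij)
  have hcompact (j : ℕ) : IsCompact (⇑(f ^ j) '' K ∩ sphere 0 1) :=
    (f ^ j).isCompact_image_inter_sphere hK hsmul fun x hx hx0 => (hf0 j ⟨hx, hx0⟩).2
  obtain ⟨m₀, hm₀⟩ := exists_subset_nhds_of_isCompact hanti.directed_ge hcompact
    fun x hx => hU.mem_nhds (hKU (by rwa [iInter_inter]))
  exact ⟨m₀, fun m hm => (hanti hm).trans hm₀⟩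

theorem Module.End.exists_pow_apply_mem [FiniteDimensional ℝ E] (f : Module.End ℝ E)
    (hK : IsClosed K) (hsmul : ∀ c : ℝ, 0 < c → ∀ x ∈ K, c • x ∈ K) (h0 : (0 : E) ∈ K)
    (hf : MapsTo f (K \ {0}) (K \ {0})) {U : Set E} (hU : IsOpen U)
    (hUsmul : ∀ c : ℝ, 0 < c → ∀ y ∈ U, c • y ∈ U)
    (hKU : (⋂ j, ⇑(f ^ j) '' K) ∩ sphere 0 1 ⊆ U) :
    ∃ m₀, ∀ m ≥ m₀, ∀ x ∈ K, (f ^ m) x ≠ 0 → (f ^ m) x ∈ U := by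
  obtain ⟨m₀, hm₀⟩ := f.exists_image_pow_inter_sphere_subset hK hsmul h0 hf hU hKU
  refine ⟨m₀, fun m hm x hx hx0 => ?_⟩
  have hnorm : 0 < ‖(f ^ m) x‖ := norm_pos_iff.mpr hx0
  have hmem : ‖(f ^ m) x‖⁻¹ • (f ^ m) x ∈ ⇑(f ^ m) '' K ∩ sphere 0 1 :=
    ⟨⟨_, hsmul _ (inv_pos.mpr hnorm) x hx, map_smul _ _ _⟩,
      mem_sphere_zero_iff_norm.mpr (norm_smul_inv_norm hx0)⟩
  simpa [smul_inv_smul₀ hnorm.ne'] using hUsmul _ hnorm _ (hm₀ m hm hmem)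

end

theorem stmt_6_general (d : ℕ) (K : Set (Fin d → ℝ))
    (hsmul : ∀ (c : ℝ), 0 < c → ∀ x ∈ K, c • x ∈ K)
    (hclosed : IsClosed K) (hpointed : K ∩ (-K) ⊆ {0})
    (A : Matrix (Fin d) (Fin d) ℝ)
    (hcontract : ∀ x ∈ K, x ≠ 0 → A.mulVec x ∈ interior K)
    (v : Fin d → ℝ) (hvnz : ∀ i, v i ≠ 0)
    (hTS : (⋂ j : ℕ, (fun x => (A ^ j).mulVec x) '' K) =
      {x : Fin d → ℝ | ∃ c : ℝ, 0 ≤ c ∧ x = c • v}) :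
    ∃ m0 : ℕ, ∀ m ≥ m0, ∀ x ∈ K, ∀ i : Fin d,
      (0 < v i → 0 ≤ (A ^ m).mulVec x i) ∧ (v i < 0 → (A ^ m).mulVec x i ≤ 0) := by
  obtain hd | hd := isEmpty_or_nonempty (Fin d)
  · exact ⟨0, fun _ _ _ _ i => isEmptyElim i⟩
  have hpow (j : ℕ) : ⇑(Matrix.toLin' A ^ j) = (A ^ j).mulVec := by
    rw [← Matrix.toLin'_pow]; rfl
  have h0 : (0 : Fin d → ℝ) ∈ K := by
    have : (0 : Fin d → ℝ) ∈ ⋂ j : ℕ, (fun x => (A ^ j).mulVec x) '' K :=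
      hTS ▸ ⟨0, le_rfl, (zero_smul ℝ v).symm⟩
    simpa using mem_iInter.mp this 0
  have hray : (⋂ j, ⇑(Matrix.toLin' A ^ j) '' K) ∩ sphere 0 1 ⊆ openOrthant v := by
    rintro _ ⟨hy, hy1⟩
    simp only [hpow, hTS] at hy
    obtain ⟨c, hc, rfl⟩ := hy
    have hc0 : c ≠ 0 := by rintro rfl; simp at hy1
    exact smul_mem_openOrthant (hc.lt_of_ne' hc0) (self_mem_openOrthant hvnz)
  obtain ⟨m₀, hm₀⟩ := Module.End.exists_pow_apply_mem (Matrix.toLin' A) hclosed hsmul h0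
    (mapsTo_diff_zero_of_mapsTo_interior (zero_notMem_interior_of_inter_neg_subset hpointed)
      hcontract) isOpen_openOrthant (fun _ hc _ => smul_mem_openOrthant hc) hray
  refine ⟨m₀, fun m hm x hx i => ?_⟩
  rcases eq_or_ne ((A ^ m).mulVec x) 0 with hy | hy
  · simp [hy]
  have hyv : 0 < (A ^ m).mulVec x i * v i := by
    simpa only [hpow] using hm₀ m hm x hx (by rwa [hpow]) i
  exact ⟨fun hv => ((pos_iff_pos_of_mul_pos hyv).mpr hv).le,
    fun hv => ((neg_iff_neg_of_mul_pos hyv).mpr hv).le⟩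

/-- If `A` contracts a proper cone `K`, with eigenvector `v ∈ K°` whose
coordinates are all nonzero, and `⋂ⱼ Aʲ K = ℝ₊·v` (Tam–Schneider), then for
`m` large enough the cone `A^m K` lies in the closed orthant given by the
signs of the coordinates of `v`. -/
theorem stmt_6 (d : ℕ) (K : Set (Fin d → ℝ))
    (hadd : ∀ x ∈ K, ∀ y ∈ K, x + y ∈ K)
    (hsmul : ∀ (c : ℝ), 0 < c → ∀ x ∈ K, c • x ∈ K)
    (hclosed : IsClosed K) (hpointed : K ∩ (-K) ⊆ {0})
    (hsolid : (interior K).Nonempty)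
    (A : Matrix (Fin d) (Fin d) ℝ)
    (hcontract : ∀ x ∈ K, x ≠ 0 → A.mulVec x ∈ interior K)
    (v : Fin d → ℝ) (hv : v ∈ interior K) (hvnz : ∀ i, v i ≠ 0)
    (lam : ℝ) (heig : A.mulVec v = lam • v)
    (hTS : (⋂ j : ℕ, (fun x => (A ^ j).mulVec x) '' K) =
      {x : Fin d → ℝ | ∃ c : ℝ, 0 ≤ c ∧ x = c • v}) :
    ∃ m0 : ℕ, ∀ m ≥ m0, ∀ x ∈ K, ∀ i : Fin d,
      (0 < v i → 0 ≤ (A ^ m).mulVec x i) ∧ (v i < 0 → (A ^ m).mulVec x i ≤ 0) :=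
  stmt_6_general d K hsmul hclosed hpointed A hcontract v hvnz hTS
end

section
/- Let V_{i,j} be a basis of R^d with A V_{1,1} = λ₁ V_{1,1} and A V_{i,j} = λ_i V_{i,j} + ε V_{i,j−1} (ε-perturbed Jordan structure), where λ₁ > 0 is simple and for each i ≠ 1 a sub-multiplicative norm N_i on C satisfies N_i(λ_i) < λ₁ and 0 < ε < λ₁ − N_i(λ_i). If W = Σ a_{i,j} V_{i,j} with a_{1,1} ≥ N_i(a_{i,j}) for all i ≥ 2 and j, and not all coefficients zero, then the coefficients α_{i,j} of AW satisfy α_{1,1} = λ₁ a_{1,1} > N_i(α_{i,j}) for all i ≥ 2 and j. -/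
/-!
Write `c = Re a_{1,1} ≥ 0`. Every other coefficient of `AW` has the shape `λ_i z + t` with
`N_i(z) ≤ c` and `t` either `0` or `ε w` with `N_i(w) ≤ c`, so sub-multiplicativity and the
triangle inequality give `N_i(α_{i,j}) ≤ (N_i(λ_i) + ε) c`. Since `N_i(λ_i) + ε < λ₁`, this is
strictly below `λ₁ c = Re α_{1,1}` as soon as `c > 0`, and `c = 0` would force `W = 0`.
-/

section JordanCoeff

variable {N : ℂ → ℝ}

theorem jordanCoeff_le (hNnonneg : ∀ z, 0 ≤ N z) (hNtri : ∀ y z, N (y + z) ≤ N y + N z)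
    (hNmul : ∀ y z, N (y * z) ≤ N y * N z) {lam z t : ℂ} {c ε : ℝ}
    (hz : N z ≤ c) (ht : N t ≤ ε * c) : N (lam * z + t) ≤ (N lam + ε) * c :=
  calc N (lam * z + t) ≤ N lam * N z + N t := by linarith [hNtri (lam * z) t, hNmul lam z]
    _ ≤ N lam * c + ε * c := by gcongr; exact hNnonneg lam
    _ = (N lam + ε) * c := by ring

theorem jordanShift_le (hNdef : ∀ z, N z = 0 ↔ z = 0)
    (hNhom : ∀ (r : ℝ) z, N ((r : ℂ) * z) = |r| * N z) {n : ℕ} {ε c : ℝ}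
    (hε : 0 ≤ ε) (hc : 0 ≤ c) {w : Fin n → ℂ} (hw : ∀ j, N (w j) ≤ c) (j : Fin n) :
    N (if h : (j : ℕ) + 1 < n then (ε : ℂ) * w ⟨(j : ℕ) + 1, h⟩ else 0) ≤ ε * c := by
  split_ifs
  · rw [hNhom, abs_of_nonneg hε]
    exact mul_le_mul_of_nonneg_left (hw _) hε
  · rw [(hNdef 0).mpr rfl]
    positivity

end JordanCoeff

theorem pivot_re_pos {k : ℕ} (hk : 0 < k) {m : Fin k → ℕ} (hm0 : m ⟨0, hk⟩ = 1)
    {N : Fin k → ℂ → ℝ} (hNnonneg : ∀ i z, 0 ≤ N i z) (hNdef : ∀ i z, N i z = 0 ↔ z = 0)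
    {a : (i : Fin k) → Fin (m i) → ℂ} {j0 : Fin (m ⟨0, hk⟩)} (him : (a ⟨0, hk⟩ j0).im = 0)
    (ha : ∀ i : Fin k, i ≠ ⟨0, hk⟩ → ∀ j : Fin (m i), N i (a i j) ≤ (a ⟨0, hk⟩ j0).re)
    (hnz : ∃ (i : Fin k) (j : Fin (m i)), a i j ≠ 0) (hre : 0 ≤ (a ⟨0, hk⟩ j0).re) :
    0 < (a ⟨0, hk⟩ j0).re := by
  refine hre.lt_of_ne fun h0 => ?_
  obtain ⟨i, j, hne⟩ := hnz
  by_cases hi : i = ⟨0, hk⟩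
  · subst hi
    have hj : j = j0 := Fin.ext (by have := j.isLt; have := j0.isLt; omega)
    exact hne (hj ▸ Complex.ext (by simp [← h0]) (by simpa using him))
  · exact hne ((hNdef i _).mp (le_antisymm (h0 ▸ ha i hi j) (hNnonneg i _)))

theorem stmt_10_general (k : ℕ) (hk : 0 < k) (m : Fin k → ℕ) (hm0 : m ⟨0, hk⟩ = 1)
    (lam : Fin k → ℂ) (lam1 : ℝ) (hlam1 : lam ⟨0, hk⟩ = (lam1 : ℂ))
    (N : Fin k → ℂ → ℝ)
    (hNnonneg : ∀ i z, 0 ≤ N i z)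
    (hNdef : ∀ i z, N i z = 0 ↔ z = 0)
    (hNtri : ∀ i y z, N i (y + z) ≤ N i y + N i z)
    (hNhom : ∀ i (r : ℝ) z, N i ((r : ℂ) * z) = |r| * N i z)
    (hNmul : ∀ i y z, N i (y * z) ≤ N i y * N i z)
    (ε : ℝ) (hε : 0 < ε)
    (hε2 : ∀ i : Fin k, i ≠ ⟨0, hk⟩ → ε < lam1 - N i (lam i))
    (a : (i : Fin k) → Fin (m i) → ℂ)
    (ha11re : ∀ j0 : Fin (m ⟨0, hk⟩), (a ⟨0, hk⟩ j0).im = 0)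
    (ha : ∀ (i : Fin k), i ≠ ⟨0, hk⟩ → ∀ (j : Fin (m i)) (j0 : Fin (m ⟨0, hk⟩)),
      N i (a i j) ≤ (a ⟨0, hk⟩ j0).re)
    (hnz : ∃ (i : Fin k) (j : Fin (m i)), a i j ≠ 0)
    (α : (i : Fin k) → Fin (m i) → ℂ)
    (hα : ∀ (i : Fin k) (j : Fin (m i)), α i j =
      lam i * a i j + if h : (j : ℕ) + 1 < m i then (ε : ℂ) * a i ⟨(j : ℕ) + 1, h⟩ else 0) :
    (∀ j0 : Fin (m ⟨0, hk⟩), α ⟨0, hk⟩ j0 = (lam1 : ℂ) * a ⟨0, hk⟩ j0) ∧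
    (∀ i : Fin k, i ≠ ⟨0, hk⟩ → ∀ (j : Fin (m i)) (j0 : Fin (m ⟨0, hk⟩)),
      N i (α i j) < (α ⟨0, hk⟩ j0).re) := by
  have hpivot (j0 : Fin (m ⟨0, hk⟩)) : α ⟨0, hk⟩ j0 = (lam1 : ℂ) * a ⟨0, hk⟩ j0 := by
    have hj0 : (j0 : ℕ) + 1 ≥ m ⟨0, hk⟩ := by omega
    rw [hα, hlam1, dif_neg (by omega), add_zero]
  refine ⟨hpivot, fun i hi j j0 => ?_⟩
  set c := (a ⟨0, hk⟩ j0).re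
  have hc0 : 0 ≤ c := (hNnonneg i (a i j)).trans (ha i hi j j0)
  have hc : 0 < c := pivot_re_pos hk hm0 hNnonneg hNdef (ha11re j0)
    (fun i' hi' j' => ha i' hi' j' j0) hnz hc0
  have hαre : (α ⟨0, hk⟩ j0).re = lam1 * c := by simp [hpivot, c, Complex.mul_re]
  rw [hαre, hα]
  calc _ ≤ (N i (lam i) + ε) * c :=
        jordanCoeff_le (hNnonneg i) (hNtri i) (hNmul i) (ha i hi j j0)
          (jordanShift_le (hNdef i) (hNhom i) hε.le hc0 (fun j' => ha i hi j' j0) j)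
    _ < lam1 * c := mul_lt_mul_of_pos_right (by linarith [hε2 i hi]) hc

/-- Key computation for the contraction of the polyhedral cone: if the
coefficients `a_{i,j}` of `W` satisfy `a_{1,1} ≥ N_i(a_{i,j})`, not all zero,
then the coefficients `α_{i,j}` of `AW` satisfy
`α_{1,1} = λ₁ a_{1,1} > N_i(α_{i,j})` for all `i ≠ 1`. -/
theorem stmt_10 (k : ℕ) (hk : 0 < k) (m : Fin k → ℕ) (hm0 : m ⟨0, hk⟩ = 1)
    (lam : Fin k → ℂ) (lam1 : ℝ) (hlam1 : lam ⟨0, hk⟩ = (lam1 : ℂ))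
    (hlam1pos : 0 < lam1)
    (N : Fin k → ℂ → ℝ)
    (hNnonneg : ∀ i z, 0 ≤ N i z)
    (hNdef : ∀ i z, N i z = 0 ↔ z = 0)
    (hNtri : ∀ i y z, N i (y + z) ≤ N i y + N i z)
    (hNhom : ∀ i (r : ℝ) z, N i ((r : ℂ) * z) = |r| * N i z)
    (hNmul : ∀ i y z, N i (y * z) ≤ N i y * N i z)
    (hNdom : ∀ i : Fin k, i ≠ ⟨0, hk⟩ → N i (lam i) < lam1)
    (ε : ℝ) (hε : 0 < ε)
    (hε2 : ∀ i : Fin k, i ≠ ⟨0, hk⟩ → ε < lam1 - N i (lam i))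
    (a : (i : Fin k) → Fin (m i) → ℂ)
    (ha11re : ∀ j0 : Fin (m ⟨0, hk⟩), (a ⟨0, hk⟩ j0).im = 0)
    (ha : ∀ (i : Fin k), i ≠ ⟨0, hk⟩ → ∀ (j : Fin (m i)) (j0 : Fin (m ⟨0, hk⟩)),
      N i (a i j) ≤ (a ⟨0, hk⟩ j0).re)
    (hnz : ∃ (i : Fin k) (j : Fin (m i)), a i j ≠ 0)
    (α : (i : Fin k) → Fin (m i) → ℂ)
    (hα : ∀ (i : Fin k) (j : Fin (m i)), α i j =
      lam i * a i j + if h : (j : ℕ) + 1 < m i then (ε : ℂ) * a i ⟨(j : ℕ) + 1, h⟩ else 0) :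
    (∀ j0 : Fin (m ⟨0, hk⟩), α ⟨0, hk⟩ j0 = (lam1 : ℂ) * a ⟨0, hk⟩ j0) ∧
    (∀ i : Fin k, i ≠ ⟨0, hk⟩ → ∀ (j : Fin (m i)) (j0 : Fin (m ⟨0, hk⟩)),
      N i (α i j) < (α ⟨0, hk⟩ j0).re) :=
  stmt_10_general k hk m hm0 lam lam1 hlam1 N hNnonneg hNdef hNtri hNhom hNmul ε hε hε2 a ha11re ha
    hnz α hα
end

section
/- Let the sequence (u_n) satisfy a linear recurrence of order d with companion matrices A(n), and suppose K is a cone contained in R^{d−1} × R_{≥0} with A(n) K ⊆ K for all n ≥ m. If U_{n₀} ∈ K for some n₀ ≥ m and u_0, …, u_{n₀+d−2} ≥ 0, then u_n ≥ 0 for all n. -/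
/-!
Stability of `K` under the companion matrices propagates `U_{n₀} ∈ K` to every later window
`U_n`, and each such window has nonnegative last entry `u_{n+d-1}`. This covers every index
from `n₀ + d - 1` on; the earlier ones are nonnegative by assumption.
-/

open Set

theorem mem_of_mapsTo_of_succ_eq {α : Type*} {K : Set α} {f : ℕ → α → α} {x : ℕ → α}
    (hx : ∀ n, x (n + 1) = f n (x n)) {n₀ : ℕ} (hf : ∀ n ≥ n₀, MapsTo (f n) K K)
    (h₀ : x n₀ ∈ K) : ∀ n ≥ n₀, x n ∈ K := by
  intro n hn
  induction n, hn using Nat.le_induction with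
  | base => exact h₀
  | succ n hn ih => exact hx n ▸ hf n hn ih

/-- Larger cones: if `K ⊆ ℝ^{d-1} × ℝ₊` is stable under the companion
matrices `A(n)` for `n ≥ m`, `U_{n₀} ∈ K` for some `n₀ ≥ m`, and
`u_0, …, u_{n₀+d-2} ≥ 0`, then `u_n ≥ 0` for all `n`. -/
theorem stmt_12 (d : ℕ) (hd : 0 < d) (u : ℕ → ℝ)
    (A : ℕ → Matrix (Fin d) (Fin d) ℝ)
    (hU : ∀ n : ℕ, (fun i : Fin d => u (n + 1 + (i : ℕ))) =
      (A n).mulVec (fun i : Fin d => u (n + (i : ℕ))))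
    (K : Set (Fin d → ℝ))
    (hKlast : ∀ x ∈ K, 0 ≤ x ⟨d - 1, Nat.sub_lt hd one_pos⟩)
    (m : ℕ) (hstab : ∀ n ≥ m, ∀ x ∈ K, (A n).mulVec x ∈ K)
    (n₀ : ℕ) (hn₀ : m ≤ n₀)
    (hmem : (fun i : Fin d => u (n₀ + (i : ℕ))) ∈ K)
    (hinit : ∀ i ≤ n₀ + d - 2, 0 ≤ u i) :
    ∀ n, 0 ≤ u n := by
  have hwindow : ∀ n ≥ n₀, (fun i : Fin d => u (n + (i : ℕ))) ∈ K :=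
    mem_of_mapsTo_of_succ_eq hU (fun n hn x hx => hstab n (hn₀.trans hn) x hx) hmem
  intro n
  rcases le_or_gt n (n₀ + d - 2) with hn | hn
  · exact hinit n hn
  · have hlast := hKlast _ (hwindow (n - (d - 1)) (by omega))
    have hidx : n - (d - 1) + (d - 1) = n := by omega
    simpa only [hidx] using hlast
end

section
/- Let A be a real d×d matrix with a unique simple positive dominant eigenvalue λ and associated eigenvector V, and let W be an eigenvector of the transpose of A for λ with ⟨W, U₀⟩ ≠ 0. If the power iteration U_{n+1} = A U_n starts at U₀, then there exist signs ε_n ∈ {−1,1} and c ≠ 0 such that ε_n U_n/‖U_n‖ → cV as n → ∞. -/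
/-!
Write `charpoly A = (X - λ) q`; simplicity gives `q(λ) ≠ 0`. Cayley–Hamilton gives
`(A - λ) q(A) = 0`, and the `λ`-eigenspace is the line through `V` (geometric multiplicity is at
most algebraic multiplicity), so `q(A) U₀ = t V`. Pairing with the left eigenvector `W` gives
`⟨W, q(A) U₀⟩ = q(λ) ⟨W, U₀⟩ ≠ 0`, so `t ≠ 0` and `U₀ = α V + x` with `α = t / q(λ)` and
`q(A) x = 0`.
Every complex root `μ` of `q` has `|μ| < λ`; splitting off one factor `X - μ` at a time, the
sequence `aₙ = λ⁻ⁿ Aⁿ x` satisfies `‖aₙ₊₁‖ ≤ (|μ|/λ) ‖aₙ‖ + o(1)`, so `aₙ → 0`. Thus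
`λ⁻ⁿ Uₙ → α V`, and normalising gives `Uₙ / ‖Uₙ‖ → α V / ‖α V‖` with every sign `+1`.
-/

open Filter Topology Polynomial Matrix

theorem tendsto_zero_of_le_mul_add {a c : ℕ → ℝ} {k : ℝ} (ha : ∀ n, 0 ≤ a n) (hk₀ : 0 ≤ k)
    (hk₁ : k < 1) (hc : Tendsto c atTop (𝓝 0)) (hrec : ∀ n, a (n + 1) ≤ k * a n + c n) :
    Tendsto a atTop (𝓝 0) := by
  refine tendsto_order.2 ⟨fun b hb => Eventually.of_forall fun n => hb.trans_le (ha n),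
    fun ε hε => ?_⟩
  obtain ⟨N, hN⟩ := eventually_atTop.1 <|
    (tendsto_order.1 hc).2 ((1 - k) * (ε / 2)) (by nlinarith)
  -- past `N`, the excess `a n - ε / 2` contracts by the factor `k`
  have hcontract : ∀ m, a (m + N) - ε / 2 ≤ k ^ m * (a N - ε / 2) := by
    intro m
    induction m with
    | zero => simp
    | succ m ih =>
      have := hrec (m + N)
      have := (hN (m + N) (by omega)).le
      rw [Nat.add_right_comm, pow_succ]
      nlinarith
  have hpow : Tendsto (fun m => k ^ m * (a N - ε / 2)) atTop (𝓝 0) := by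
    simpa using (tendsto_pow_atTop_nhds_zero_of_lt_one hk₀ hk₁).mul_const (a N - ε / 2)
  obtain ⟨M, hM⟩ := eventually_atTop.1 <| (tendsto_order.1 hpow).2 (ε / 2) (by positivity)
  refine eventually_atTop.2 ⟨M + N, fun n hn => ?_⟩
  obtain ⟨m, rfl⟩ := Nat.exists_eq_add_of_le hn
  have := hcontract (M + m)
  rw [Nat.add_right_comm] at this
  linarith [hM (M + m) (by omega)]

namespace Module.End

variable {E : Type*} [NormedAddCommGroup E] [NormedSpace ℂ E] (T : Module.End ℂ E) {r : ℝ}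

theorem tendsto_inv_pow_smul_pow_apply_of_aeval_prod_X_sub_C (hr : 0 < r) {s : Multiset ℂ}
    (hs : ∀ μ ∈ s, ‖μ‖ < r) {x : E} (hx : aeval T (s.map fun μ => X - C μ).prod x = 0) :
    Tendsto (fun n => (r ^ n)⁻¹ • (T ^ n) x) atTop (𝓝 0) := by
  induction s using Multiset.induction_on generalizing x with
  | empty => simp_all
  | cons μ s ih =>
    set y := T x - μ • x
    have hy : aeval T (s.map fun μ => X - C μ).prod y = 0 := by
      rw [Multiset.map_cons, Multiset.prod_cons, mul_comm, map_mul] at hx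
      simpa [y, Module.algebraMap_end_apply] using hx
    have hb := (ih (fun ν hν => hs ν (Multiset.mem_cons_of_mem hν)) hy).norm
    rw [norm_zero] at hb
    have hstep : ∀ n, (r ^ (n + 1))⁻¹ • (T ^ (n + 1)) x
        = r⁻¹ • (μ • ((r ^ n)⁻¹ • (T ^ n) x) + (r ^ n)⁻¹ • (T ^ n) y) := by
      intro n
      have : T x = μ • x + y := by simp [y]
      rw [pow_succ T, mul_apply, this, map_add, map_smul, pow_succ, mul_inv, mul_comm, mul_smul,
        smul_add, smul_comm μ]
    refine tendsto_zero_iff_norm_tendsto_zero.2 <| tendsto_zero_of_le_mul_add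
      (fun _ => norm_nonneg _) (by positivity)
      ((div_lt_one hr).2 (hs μ (Multiset.mem_cons_self ..)))
      (by simpa using hb.const_mul r⁻¹) fun n => ?_
    rw [hstep, norm_smul, Real.norm_of_nonneg (inv_nonneg.2 hr.le), div_eq_inv_mul, mul_assoc,
      ← mul_add, ← norm_smul μ]
    gcongr
    exact norm_add_le _ _

theorem tendsto_inv_pow_smul_pow_apply_of_aeval_eq_zero (hr : 0 < r) {p : ℂ[X]} (hp : p ≠ 0)
    (hroots : ∀ μ ∈ p.roots, ‖μ‖ < r) {x : E} (hx : aeval T p x = 0) :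
    Tendsto (fun n => (r ^ n)⁻¹ • (T ^ n) x) atTop (𝓝 0) := by
  refine T.tendsto_inv_pow_smul_pow_apply_of_aeval_prod_X_sub_C hr hroots ?_
  rw [← C_leadingCoeff_mul_prod_multiset_X_sub_C (p := p) IsAlgClosed.card_roots_eq_natDegree,
    map_mul, aeval_C, mul_apply, Module.algebraMap_end_apply] at hx
  exact (smul_eq_zero.1 hx).resolve_left (leadingCoeff_ne_zero.2 hp)

theorem mem_span_singleton_of_rootMultiplicity_le_one {K M : Type*} [Field K]
    [AddCommGroup M] [Module K M] [FiniteDimensional K M] {f : Module.End K M} {μ : K}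
    (h : f.charpoly.rootMultiplicity μ ≤ 1) {v w : M} (hv : f.HasEigenvector μ v)
    (hw : w ∈ f.eigenspace μ) : w ∈ K ∙ v := by
  have hrank : Module.finrank K (f.eigenspace μ) = 1 :=
    le_antisymm ((LinearMap.finrank_eigenspace_le f μ).trans h)
      (Submodule.one_le_finrank_iff.2 (Submodule.ne_bot_iff _ |>.2 ⟨v, hv.1, hv.2⟩))
  rwa [← eq_span_singleton_of_mem_of_finrank_eq_one hrank hv.1 hv.2]

end Module.End

theorem tendsto_inv_norm_smul_of_tendsto_smul {E : Type*} [NormedAddCommGroup E]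
    [NormedSpace ℝ E] {α : Type*} {l : Filter α} {u : α → E} {s : α → ℝ} (hs : ∀ n, 0 < s n)
    {L : E} (hL : L ≠ 0) (h : Tendsto (fun n => s n • u n) l (𝓝 L)) :
    Tendsto (fun n => ‖u n‖⁻¹ • u n) l (𝓝 (‖L‖⁻¹ • L)) := by
  refine ((h.norm.inv₀ (norm_ne_zero_iff.2 hL)).smul h).congr fun n => ?_
  rw [norm_smul, Real.norm_of_nonneg (hs n).le, smul_smul, mul_inv,
    mul_right_comm, inv_mul_cancel₀ (hs n).ne', one_mul]

theorem Polynomial.exists_eq_X_sub_C_mul_of_count_roots_map_eq_one {p : ℝ[X]} (hp : p ≠ 0)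
    {a r : ℝ} (hsimple : (p.map Complex.ofRealHom).roots.count (a : ℂ) = 1)
    (hdom : ∀ μ ∈ (p.map Complex.ofRealHom).roots, μ ≠ (a : ℂ) → ‖μ‖ < r) :
    ∃ q : ℝ[X], p = (X - C a) * q ∧ q.eval a ≠ 0 ∧
      ∀ μ ∈ (q.map Complex.ofRealHom).roots, ‖μ‖ < r := by
  have hmult : p.rootMultiplicity a = 1 := by
    rwa [eq_rootMultiplicity_map Complex.ofRealHom.injective, ← count_roots]
  obtain ⟨q, hfac, hq⟩ := exists_eq_pow_rootMultiplicity_mul_and_not_dvd p hp a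
  rw [hmult, pow_one] at hfac
  rw [dvd_iff_isRoot, IsRoot.def] at hq
  refine ⟨q, hfac, hq, fun μ hμ => hdom μ (Multiset.mem_of_le (roots.le_of_dvd ?_ ?_) hμ) ?_⟩
  · exact (Polynomial.map_ne_zero_iff Complex.ofRealHom.injective).2 hp
  · rw [hfac]
    exact Polynomial.map_dvd _ (dvd_mul_left q _)
  · rintro rfl
    exact hq ((isRoot_map_iff Complex.ofRealHom.injective).1 (mem_roots'.1 hμ).2)

namespace Matrix

theorem map_ofReal_mulVec {m n : Type*} [Fintype n] (M : Matrix m n ℝ) (v : n → ℝ) :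
    M.map Complex.ofReal *ᵥ (Complex.ofReal ∘ v) = Complex.ofReal ∘ (M *ᵥ v) :=
  funext fun i => (Complex.ofRealHom.map_mulVec M v i).symm

variable {ι : Type*} [Fintype ι] [DecidableEq ι]

theorem aeval_transpose {R : Type*} [CommSemiring R] (A : Matrix ι ι R) (p : R[X]) :
    aeval Aᵀ p = (aeval A p)ᵀ := by
  induction p using Polynomial.induction_on' with
  | add p q hp hq => simp [hp, hq]
  | monomial n a => simp [transpose_pow, Algebra.algebraMap_eq_smul_one]

theorem aeval_mulVec_of_mulVec_eq_smul {R : Type*} [CommRing R] {A : Matrix ι ι R} {μ : R}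
    {v : ι → R} (hv : A *ᵥ v = μ • v) (p : R[X]) : aeval A p *ᵥ v = p.eval μ • v := by
  rw [← toLinAlgEquiv'_apply, ← AlgEquiv.coe_toAlgHom, ← aeval_algHom_apply,
    AlgEquiv.coe_toAlgHom]
  exact Module.End.aeval_apply_of_mem_apply_eq_smul (by rwa [toLinAlgEquiv'_apply])

theorem tendsto_inv_pow_smul_pow_mulVec_of_aeval_mulVec_eq_zero (A : Matrix ι ι ℝ) {r : ℝ}
    (hr : 0 < r) {q : ℝ[X]} (hq : q ≠ 0)
    (hroots : ∀ μ ∈ (q.map Complex.ofRealHom).roots, ‖μ‖ < r) {x : ι → ℝ}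
    (hx : aeval A q *ᵥ x = 0) : Tendsto (fun n => (r ^ n)⁻¹ • (A ^ n *ᵥ x)) atTop (𝓝 0) := by
  set AC := A.map Complex.ofReal
  have hAC : aeval AC (q.map Complex.ofRealHom) = (aeval A q).map Complex.ofReal := by
    rw [show Complex.ofRealHom = algebraMap ℝ ℂ from rfl, aeval_map_algebraMap]
    exact aeval_algHom_apply Complex.ofRealAm.mapMatrix A q
  have hC := Module.End.tendsto_inv_pow_smul_pow_apply_of_aeval_eq_zero (toLinAlgEquiv' AC) hr
    ((Polynomial.map_ne_zero_iff Complex.ofRealHom.injective).2 hq) hroots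
    (x := Complex.ofReal ∘ x) (by
      rw [aeval_algEquiv, AlgHom.comp_apply, AlgEquiv.coe_toAlgHom, toLinAlgEquiv'_apply, hAC,
        map_ofReal_mulVec, hx]
      rfl)
  have hpow : ∀ n,
      (toLinAlgEquiv' AC ^ n) (Complex.ofReal ∘ x) = Complex.ofReal ∘ (A ^ n *ᵥ x) := by
    intro n
    rw [← map_pow, toLinAlgEquiv'_apply, ← map_ofReal_mulVec]
    exact congrArg (· *ᵥ _) (Matrix.map_pow A Complex.ofRealHom n).symm
  have hre : Continuous fun v : ι → ℂ => fun i => (v i).re := by fun_prop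
  refine ((hre.tendsto 0).comp hC).congr fun n => ?_
  ext i
  simp only [Function.comp_apply, Pi.smul_apply, hpow, Complex.smul_re, Complex.ofReal_re]

theorem exists_aeval_mulVec_sub_smul_eq_zero {K : Type*} [Field K] {A : Matrix ι ι K} {μ : K}
    {q : K[X]} (hfac : A.charpoly = (X - C μ) * q) (hq : q.eval μ ≠ 0) {v w u : ι → K}
    (hv : v ≠ 0) (hAv : A *ᵥ v = μ • v) (hAw : Aᵀ *ᵥ w = μ • w) (hwu : w ⬝ᵥ u ≠ 0) :
    ∃ α : K, α ≠ 0 ∧ aeval A q *ᵥ (u - α • v) = 0 := by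
  have hmult : A.charpoly.rootMultiplicity μ ≤ 1 := by
    rw [hfac, rootMultiplicity_mul (hfac ▸ A.charpoly_monic.ne_zero),
      rootMultiplicity_X_sub_C_self, rootMultiplicity_eq_zero hq]
  set Q := aeval A q
  have hAQ : A * Q = μ • Q := by
    have h := aeval_self_charpoly A
    rw [hfac, map_mul, map_sub, aeval_X, aeval_C, Algebra.algebraMap_eq_smul_one, sub_mul,
      smul_mul_assoc, one_mul, sub_eq_zero] at h
    exact h
  obtain ⟨t, ht⟩ : ∃ t : K, t • v = Q *ᵥ u := by
    refine Submodule.mem_span_singleton.1 <|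
      Module.End.mem_span_singleton_of_rootMultiplicity_le_one (f := toLin' A)
        (μ := μ) (by rwa [charpoly_toLin']) ⟨?_, hv⟩ ?_ <;>
    rw [Module.End.mem_eigenspace_iff, toLin'_apply]
    · exact hAv
    · rw [mulVec_mulVec, hAQ, smul_mulVec]
  have hwQ : w ⬝ᵥ (Q *ᵥ u) = q.eval μ * (w ⬝ᵥ u) := by
    rw [dotProduct_mulVec, ← mulVec_transpose, ← aeval_transpose,
      aeval_mulVec_of_mulVec_eq_smul hAw, smul_dotProduct, smul_eq_mul]
  have ht0 : t ≠ 0 := by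
    rintro rfl
    rw [← ht, zero_smul, dotProduct_zero] at hwQ
    exact mul_ne_zero hq hwu hwQ.symm
  refine ⟨t / q.eval μ, div_ne_zero ht0 hq, ?_⟩
  rw [mulVec_sub, mulVec_smul, aeval_mulVec_of_mulVec_eq_smul hAv, smul_smul,
    div_mul_cancel₀ t hq, ht, sub_self]

end Matrix

theorem stmt_13_general (d : ℕ) (A : Matrix (Fin d) (Fin d) ℝ)
    (lam : ℝ) (hlampos : 0 < lam)
    (hsimple : ((A.map (Complex.ofReal)).charpoly.roots.count (lam : ℂ)) = 1)
    (hdom : ∀ μ ∈ (A.map (Complex.ofReal)).charpoly.roots,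
      μ ≠ (lam : ℂ) → ‖μ‖ < lam)
    (V : Fin d → ℝ) (hV : V ≠ 0) (heig : A.mulVec V = lam • V)
    (W : Fin d → ℝ) (heigT : A.transpose.mulVec W = lam • W)
    (U₀ : Fin d → ℝ) (hgen : dotProduct W U₀ ≠ 0)
    (U : ℕ → (Fin d → ℝ)) (hUdef : ∀ n, U n = (A ^ n).mulVec U₀) :
    ∃ eps : ℕ → ℝ, (∀ n, eps n = 1 ∨ eps n = -1) ∧
      ∃ c : ℝ, c ≠ 0 ∧
        Tendsto (fun n => eps n • ((‖U n‖)⁻¹ • U n)) atTop (nhds (c • V)) := by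
  obtain ⟨q, hfac, hq, hroots⟩ :=
    exists_eq_X_sub_C_mul_of_count_roots_map_eq_one A.charpoly_monic.ne_zero
      (by rwa [← A.charpoly_map]) (by rwa [← A.charpoly_map])
  have hq0 : q ≠ 0 := by rintro rfl; simp at hq
  obtain ⟨α, hα, hx⟩ := Matrix.exists_aeval_mulVec_sub_smul_eq_zero hfac hq hV heig heigT hgen
  have hlim : Tendsto (fun n => (lam ^ n)⁻¹ • U n) atTop (𝓝 (α • V)) := by
    have hsplit : ∀ n, (lam ^ n)⁻¹ • U n
        = α • V + (lam ^ n)⁻¹ • (A ^ n *ᵥ (U₀ - α • V)) := fun n => by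
      have hpow : A ^ n *ᵥ V = lam ^ n • V := by
        simpa using Matrix.aeval_mulVec_of_mulVec_eq_smul heig (X ^ n)
      rw [hUdef, mulVec_sub, mulVec_smul, hpow, smul_sub, smul_comm _ α,
        smul_smul (lam ^ n)⁻¹, inv_mul_cancel₀ (pow_pos hlampos n).ne', one_smul,
        add_sub_cancel]
    simpa [hsplit] using
      (A.tendsto_inv_pow_smul_pow_mulVec_of_aeval_mulVec_eq_zero hlampos hq0 hroots hx).const_add
        (α • V)
  refine ⟨1, fun _ => Or.inl rfl, ‖α • V‖⁻¹ * α, mul_ne_zero (by simp [hα, hV]) hα, ?_⟩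
  simpa [smul_smul] using
    tendsto_inv_norm_smul_of_tendsto_smul (fun n => by positivity) (smul_ne_zero hα hV) hlim

/-- Power method: if `A` has a unique simple positive dominant eigenvalue `λ`
with eigenvector `V`, `W` is an eigenvector of `Aᵀ` for `λ`, and
`⟨W, U₀⟩ ≠ 0`, then the normalized iterates `U_n = A^n U₀` converge in
direction (up to signs) to a nonzero multiple of `V`. -/
theorem stmt_13 (d : ℕ) (A : Matrix (Fin d) (Fin d) ℝ)
    (lam : ℝ) (hlampos : 0 < lam)
    (hsimple : ((A.map (Complex.ofReal)).charpoly.roots.count (lam : ℂ)) = 1)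
    (hdom : ∀ μ ∈ (A.map (Complex.ofReal)).charpoly.roots,
      μ ≠ (lam : ℂ) → ‖μ‖ < lam)
    (V : Fin d → ℝ) (hV : V ≠ 0) (heig : A.mulVec V = lam • V)
    (W : Fin d → ℝ) (hW : W ≠ 0) (heigT : A.transpose.mulVec W = lam • W)
    (U₀ : Fin d → ℝ) (hgen : dotProduct W U₀ ≠ 0)
    (U : ℕ → (Fin d → ℝ)) (hUdef : ∀ n, U n = (A ^ n).mulVec U₀) :
    ∃ eps : ℕ → ℝ, (∀ n, eps n = 1 ∨ eps n = -1) ∧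
      ∃ c : ℝ, c ≠ 0 ∧
        Tendsto (fun n => eps n • ((‖U n‖)⁻¹ • U n)) atTop (nhds (c • V)) :=
  stmt_13_general d A lam hlampos hsimple hdom V hV heig W heigT U₀ hgen U hUdef
end

section
/- Let λ₁ > |λ₂| ≥ … be the eigenvalue moduli of a real matrix A with λ₁ simple, and let K(V_{i,j}) be Vandergraft's cone built from an ε-Jordan basis with 0 < ε < λ₁ − |λ₂|: K = { a_{1,1} V_{1,1} + Σ_{i≥2,j} a_{i,j} V_{i,j} : a_{1,1} ≥ |a_{i,j}| for all i,j, conjugate-symmetric coefficients }. Then K is a proper cone (closed, pointed, solid) and A contracts K. -/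
/-!
Expand a real vector `x` in the ε-Jordan basis. Because the basis is closed under conjugation,
its coordinates `c_p(x)` are automatically conjugate-symmetric, and the coordinate `c_{q₀}(x)`
along the simple dominant eigenvector is real. Hence `K` is the cone `{x | ‖c_p(x)‖ ≤ c_{q₀}(x)}`
cut out by an injective linear coordinate map, which makes it closed, convex, pointed and solid.
In coordinates `A` acts by `c_{i,j} ↦ λ_i c_{i,j} + ε c_{i,j+1}`, so for `0 ≠ x ∈ K` every
coordinate of `A x` other than `q₀` has modulus at most `(‖λ_i‖ + ε) c_{q₀}(x) < λ₁ c_{q₀}(x)`,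
which equals `c_{q₀}(A x)`. So `A x` lies in the interior of `K`.
-/

open Complex ComplexConjugate Module Filter Topology Matrix

section DominatedCone

variable {E ι : Type*} [AddCommGroup E] [Module ℝ E] {f : E →ₗ[ℝ] ι → ℂ} {q₀ : ι} {x y : E}

variable (f q₀) in
def dominatedCone : Set E := {x | ∀ p, ‖f x p‖ ≤ (f x q₀).re}

theorem dominatedCone.add_mem (hx : x ∈ dominatedCone f q₀) (hy : y ∈ dominatedCone f q₀) :
    x + y ∈ dominatedCone f q₀ := fun p => by
  simpa using (norm_add_le _ _).trans (add_le_add (hx p) (hy p))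

theorem dominatedCone.smul_mem {c : ℝ} (hc : 0 ≤ c) (hx : x ∈ dominatedCone f q₀) :
    c • x ∈ dominatedCone f q₀ := fun p => by
  simpa [Complex.real_smul, abs_of_nonneg hc] using mul_le_mul_of_nonneg_left (hx p) hc

theorem dominatedCone.re_pos (hf : Function.Injective f) (hx : x ∈ dominatedCone f q₀)
    (hx0 : x ≠ 0) :
    0 < (f x q₀).re := by
  by_contra! hre
  refine hx0 (hf ?_)
  ext p
  rw [map_zero, Pi.zero_apply, ← norm_eq_zero]
  exact le_antisymm ((hx p).trans hre) (norm_nonneg _)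

theorem dominatedCone.inter_neg_subset (hf : Function.Injective f) :
    dominatedCone f q₀ ∩ -dominatedCone f q₀ ⊆ {0} := by
  rintro x ⟨hx, hnx⟩
  by_contra hx0
  have h1 := dominatedCone.re_pos hf hx hx0
  have h2 := dominatedCone.re_pos hf (Set.mem_neg.1 hnx) (neg_ne_zero.2 hx0)
  simp only [map_neg, Pi.neg_apply, neg_re] at h2
  linarith

variable [TopologicalSpace E]

theorem isClosed_dominatedCone (hf : Continuous f) : IsClosed (dominatedCone f q₀) := by
  simp only [dominatedCone, Set.ofPred_forall]
  exact isClosed_iInter fun p => isClosed_le (by fun_prop) (by fun_prop)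

theorem mem_interior_dominatedCone [Finite ι] (hf : Continuous f) (hreal : ∀ y, (f y q₀).im = 0)
    (hx₀ : 0 < (f x q₀).re) (hx : ∀ p ≠ q₀, ‖f x p‖ < (f x q₀).re) :
    x ∈ interior (dominatedCone f q₀) := by
  have hre : Continuous fun y => (f y q₀).re := by fun_prop
  rw [mem_interior_iff_mem_nhds]
  have hpos : ∀ᶠ y in 𝓝 x, 0 < (f y q₀).re := continuousAt_const.eventually_lt hre.continuousAt hx₀
  have hlt : ∀ᶠ y in 𝓝 x, ∀ p, p ≠ q₀ → ‖f y p‖ < (f y q₀).re := by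
    refine eventually_all.2 fun p => ?_
    by_cases hp : p = q₀
    · simp [hp]
    · exact (ContinuousAt.eventually_lt (by fun_prop) hre.continuousAt (hx p hp)).mono
        fun y hy _ => hy
  filter_upwards [hpos, hlt] with y hy₀ hy p
  by_cases hp : p = q₀
  · subst hp
    rw [← re_add_im (f y p), hreal, ofReal_zero, zero_mul, add_zero, norm_real,
      Real.norm_of_nonneg hy₀.le, ofReal_re]
  · exact (hy p hp).le

end DominatedCone

theorem Module.Basis.repr_star_apply {ι M : Type*} [Fintype ι] [AddCommGroup M] [Module ℂ M]
    [StarAddMonoid M] [StarModule ℂ M] (B : Basis ι ℂ M) {τ : ι → ι}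
    (hB : ∀ p, B (τ p) = star (B p)) (y : M) (p : ι) :
    B.repr (star y) (τ p) = star (B.repr y p) := by
  classical
  have hτ : Function.Injective τ := fun p q h =>
    B.injective (star_injective (by rw [← hB, ← hB, h]))
  have : star y = ∑ q, star (B.repr y q) • B (τ q) := by
    conv_lhs => rw [← B.sum_repr y]
    simp only [star_sum, star_smul, hB]
  rw [this]
  simp [Finsupp.single_apply, hτ.eq_iff]

theorem Module.Basis.repr_apply_of_jordanChain {κ M : Type*} [AddCommGroup M] [Module ℂ M]
    {m : κ → ℕ} (B : Basis (Σ i, Fin (m i)) ℂ M) (T : M →ₗ[ℂ] M) (μ : κ → ℂ) (ε : ℂ)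
    (hT : ∀ i j, T (B ⟨i, j⟩) = μ i • B ⟨i, j⟩ +
      if h : (j : ℕ) = 0 then 0 else ε • B ⟨i, ⟨j - 1, by omega⟩⟩)
    (y : M) (i : κ) (j : Fin (m i)) :
    B.repr (T y) ⟨i, j⟩ = μ i * B.repr y ⟨i, j⟩ +
      if h : (j : ℕ) + 1 < m i then ε * B.repr y ⟨i, ⟨j + 1, h⟩⟩ else 0 := by
  classical
  have hbasisVec (q : Σ i, Fin (m i)) : B.repr (T (B q)) ⟨i, j⟩ = μ i * B.repr (B q) ⟨i, j⟩ +
      if h : (j : ℕ) + 1 < m i then ε * B.repr (B q) ⟨i, ⟨j + 1, h⟩⟩ else 0 := by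
    obtain ⟨i', j'⟩ := q
    rw [hT]
    by_cases hi : i' = i
    · subst hi
      by_cases h0 : (j' : ℕ) = 0
      · simp [h0, Finsupp.single_apply, Fin.ext_iff]
      · have := j'.isLt
        simp [h0, Finsupp.single_apply, Fin.ext_iff]
        split_ifs <;> first | rfl | omega
    · by_cases h0 : (j' : ℕ) = 0 <;> simp [hi, h0]
  have hlin : (B.coord ⟨i, j⟩).comp T = μ i • B.coord ⟨i, j⟩ +
      if h : (j : ℕ) + 1 < m i then ε • B.coord ⟨i, ⟨j + 1, h⟩⟩ else 0 :=
    B.ext fun q => by split_ifs <;> simp_all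
  have := LinearMap.congr_fun hlin y
  split_ifs at this ⊢ <;> simpa using this

section RealCoordinates

variable {n ι : Type*} [Fintype ι] (B : Basis ι ℂ (n → ℂ))

noncomputable def realCoord : (n → ℝ) →ₗ[ℝ] ι → ℂ :=
  B.equivFun.toLinearMap.restrictScalars ℝ ∘ₗ ofRealAm.toLinearMap.compLeft n

theorem realCoord_apply (x : n → ℝ) : realCoord B x = B.repr (fun t => (x t : ℂ)) := by
  ext; rfl

theorem realCoord_injective : Function.Injective (realCoord B) := by
  intro x y h
  rw [realCoord_apply, realCoord_apply] at h
  funext t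
  exact_mod_cast congrFun (B.repr.injective (Finsupp.ext (congrFun h))) t

theorem continuous_realCoord [Finite n] : Continuous (realCoord B) :=
  LinearMap.continuous_of_finiteDimensional _

theorem realCoord_apply_of_map_star {τ : ι → ι}
    (hB : ∀ p, B (τ p) = star (B p)) (x : n → ℝ) (p : ι) :
    realCoord B x (τ p) = conj (realCoord B x p) := by
  have hx : star (fun t => (x t : ℂ)) = fun t => (x t : ℂ) := by
    funext t; exact conj_ofReal _
  simpa [realCoord_apply, hx] using B.repr_star_apply hB (fun t => (x t : ℂ)) p

end RealCoordinates

theorem apply_sigmaMap_eq_star {κ n : Type*} {m : κ → ℕ}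
    (B : (Σ i, Fin (m i)) → n → ℂ) (V : (i : κ) → Fin (m i) → n → ℂ)
    (hBV : ∀ p, B p = V p.1 p.2) (σ : κ → κ) (hσm : ∀ i, m (σ i) = m i)
    (hσV : ∀ i j, V (σ i) (Fin.cast (hσm i).symm j) = fun t => conj (V i j t))
    (p : Σ i, Fin (m i)) : B (Sigma.map σ (fun i => Fin.cast (hσm i).symm) p) = star (B p) := by
  simp only [Sigma.map, hBV, hσV]; rfl

theorem interior_dominatedCone_nonempty {n ι : Type*} [Fintype n] [Fintype ι]
    (B : Basis ι ℂ (n → ℂ)) {q₀ : ι} (hreal : ∀ x, (realCoord B x q₀).im = 0)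
    (hBq₀ : star (B q₀) = B q₀) : (interior (dominatedCone (realCoord B) q₀)).Nonempty := by
  classical
  have hx₀ : realCoord B (fun t => (B q₀ t).re) = B.repr (B q₀) := by
    rw [realCoord_apply]
    congr 2
    funext t
    exact conj_eq_iff_re.1 (congrFun hBq₀ t)
  refine ⟨fun t => (B q₀ t).re, mem_interior_dominatedCone (continuous_realCoord B) hreal ?_
    fun p hp => ?_⟩
  · simp [hx₀]
  · simp [hx₀, hp]

theorem vandergraftCone_eq_dominatedCone {κ n : Type*} [Fintype κ] {m : κ → ℕ}
    (B : Basis (Σ i, Fin (m i)) ℂ (n → ℂ)) (V : (i : κ) → Fin (m i) → n → ℂ)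
    (hBV : ∀ p, B p = V p.1 p.2) (σ : κ → κ) (hσm : ∀ i, m (σ i) = m i)
    (hσV : ∀ i j, V (σ i) (Fin.cast (hσm i).symm j) = fun t => conj (V i j t))
    {i₀ : κ} (hm : m i₀ = 1) :
    {x : n → ℝ | ∃ a : (i : κ) → Fin (m i) → ℂ,
      (∀ i j, a (σ i) (Fin.cast (hσm i).symm j) = conj (a i j)) ∧
      (∀ i j (j₀ : Fin (m i₀)), ‖a i j‖ ≤ (a i₀ j₀).re) ∧
      ∀ t, (x t : ℂ) = ∑ i, ∑ j, a i j * V i j t} =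
    dominatedCone (realCoord B) ⟨i₀, ⟨0, by omega⟩⟩ := by
  have hτB := apply_sigmaMap_eq_star B V hBV σ hσm hσV
  have hsum (y : n → ℂ) (a : (i : κ) → Fin (m i) → ℂ) :
      (∑ p, a p.1 p.2 • B p) = y ↔ ∀ t, y t = ∑ i, ∑ j, a i j * V i j t := by
    simp only [funext_iff, Finset.sum_apply, Fintype.sum_sigma, hBV, Pi.smul_apply, smul_eq_mul]
    exact ⟨fun h t => (h t).symm, fun h t => (h t).symm⟩
  ext x
  constructor
  · rintro ⟨a, -, ha, hx⟩ p
    have hcoord : realCoord B x = fun p => a p.1 p.2 := by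
      rw [realCoord_apply, ← (hsum _ a).2 hx, B.repr_sum_self]
    rw [hcoord]
    exact ha p.1 p.2 _
  · intro hx
    refine ⟨fun i j => realCoord B x ⟨i, j⟩, fun i j => realCoord_apply_of_map_star B hτB x ⟨i, j⟩,
      fun i j j₀ => ?_, (hsum _ _).1 ?_⟩
    · obtain rfl : j₀ = ⟨0, by omega⟩ := Fin.ext (by omega)
      exact hx _
    · simp [realCoord_apply]

theorem realCoord_mulVec {n ι : Type*} [Fintype n] [Fintype ι] (B : Basis ι ℂ (n → ℂ))
    (A : Matrix n n ℝ) (x : n → ℝ) :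
    realCoord B (A *ᵥ x) = B.repr ((A.map ofReal) *ᵥ fun t => (x t : ℂ)) := by
  rw [realCoord_apply]
  congr 2
  funext t
  exact ofRealHom.map_mulVec A x t

theorem mulVec_mem_interior_dominatedCone {κ n : Type*} [Fintype κ] [Fintype n] {m : κ → ℕ}
    (B : Basis (Σ i, Fin (m i)) ℂ (n → ℂ)) (A : Matrix n n ℝ) (lam : κ → ℂ) {i₀ : κ}
    (hm : m i₀ = 1) {lam1 ε : ℝ} (hlam1 : lam i₀ = lam1) (hlam1pos : 0 < lam1) (hε : 0 ≤ ε)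
    (hε2 : ∀ i ≠ i₀, ε < lam1 - ‖lam i‖)
    (hAB : ∀ i j, (A.map ofReal) *ᵥ B ⟨i, j⟩ = lam i • B ⟨i, j⟩ +
      if h : (j : ℕ) = 0 then 0 else (ε : ℂ) • B ⟨i, ⟨j - 1, by omega⟩⟩)
    (hreal : ∀ x, (realCoord B x ⟨i₀, ⟨0, by omega⟩⟩).im = 0)
    {x : n → ℝ} (hx : x ∈ dominatedCone (realCoord B) ⟨i₀, ⟨0, by omega⟩⟩) (hx0 : x ≠ 0) :
    A *ᵥ x ∈ interior (dominatedCone (realCoord B) ⟨i₀, ⟨0, by omega⟩⟩) := by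
  set q₀ : Σ i, Fin (m i) := ⟨i₀, ⟨0, by omega⟩⟩
  set R := (realCoord B x q₀).re
  have hR : 0 < R := dominatedCone.re_pos (realCoord_injective B) hx hx0
  have hcoord (i : κ) (j : Fin (m i)) : realCoord B (A *ᵥ x) ⟨i, j⟩ =
      lam i * realCoord B x ⟨i, j⟩ +
        if h : (j : ℕ) + 1 < m i then ε * realCoord B x ⟨i, ⟨j + 1, h⟩⟩ else 0 := by
    rw [realCoord_mulVec, realCoord_apply]
    exact B.repr_apply_of_jordanChain (A.map ofReal).mulVecLin lam ε hAB _ i j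
  have hq₀ : (realCoord B (A *ᵥ x) q₀).re = lam1 * R := by
    rw [hcoord, dif_neg (by omega), add_zero, hlam1, re_ofReal_mul]
  refine mem_interior_dominatedCone (continuous_realCoord B) hreal
    (hq₀ ▸ mul_pos hlam1pos hR) fun ⟨i, j⟩ hp => ?_
  have hi : i ≠ i₀ := by
    rintro rfl
    exact hp (Sigma.ext rfl (heq_of_eq (Fin.ext (by simp only [q₀]; omega))))
  have hnext : ‖if h : (j : ℕ) + 1 < m i then (ε : ℂ) * realCoord B x ⟨i, ⟨j + 1, h⟩⟩ else 0‖
      ≤ ε * R := by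
    split_ifs
    · rw [norm_mul, norm_real, Real.norm_of_nonneg hε]
      exact mul_le_mul_of_nonneg_left (hx _) hε
    · simpa using mul_nonneg hε hR.le
  rw [hq₀, hcoord]
  calc _ ≤ ‖lam i‖ * R + ε * R :=
        (norm_add_le _ _).trans (add_le_add (by rw [norm_mul]; gcongr; exact hx _) hnext)
    _ < lam1 * R := by nlinarith [hε2 i hi]

/-- Vandergraft's cone `K(V_{i,j})`, built from an ε-Jordan basis with
`0 < ε < λ₁ - |λ₂|`, is a proper cone contracted by `A`. -/
theorem stmt_14 (d k : ℕ) (hk : 0 < k) (m : Fin k → ℕ) (hm0 : m ⟨0, hk⟩ = 1)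
    (hcard : ∑ i, m i = d)
    (A : Matrix (Fin d) (Fin d) ℝ)
    (lam : Fin k → ℂ) (lam1 : ℝ) (hlam1 : lam ⟨0, hk⟩ = (lam1 : ℂ)) (hlam1pos : 0 < lam1)
    (hdom : ∀ i : Fin k, i ≠ ⟨0, hk⟩ → ‖lam i‖ < lam1)
    (ε : ℝ) (hε : 0 < ε)
    (hε2 : ∀ i : Fin k, i ≠ ⟨0, hk⟩ → ε < lam1 - ‖lam i‖)
    (V : (i : Fin k) → Fin (m i) → (Fin d → ℂ))
    (hbasis : LinearIndependent ℂ (fun p : Σ i : Fin k, Fin (m i) => V p.1 p.2))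
    (hAV : ∀ (i : Fin k) (j : Fin (m i)),
      (A.map (Complex.ofReal)).mulVec (V i j) =
        lam i • V i j +
          if h : (j : ℕ) = 0 then 0
          else (ε : ℂ) • V i ⟨(j : ℕ) - 1, lt_of_le_of_lt (Nat.sub_le _ _) j.isLt⟩)
    (σ : Fin k → Fin k) (hσm : ∀ i, m (σ i) = m i)
    (hσlam : ∀ i, lam (σ i) = (starRingEnd ℂ) (lam i))
    (hσV : ∀ (i : Fin k) (j : Fin (m i)),
      V (σ i) (Fin.cast (hσm i).symm j) = fun t => (starRingEnd ℂ) (V i j t))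
    (K : Set (Fin d → ℝ))
    (hK : K = {x : Fin d → ℝ | ∃ a : (i : Fin k) → Fin (m i) → ℂ,
      (∀ (i : Fin k) (j : Fin (m i)),
        a (σ i) (Fin.cast (hσm i).symm j) = (starRingEnd ℂ) (a i j)) ∧
      (∀ (i : Fin k) (j : Fin (m i)) (j0 : Fin (m ⟨0, hk⟩)),
        ‖a i j‖ ≤ (a ⟨0, hk⟩ j0).re) ∧
      (∀ t : Fin d, (x t : ℂ) = ∑ i : Fin k, ∑ j : Fin (m i), a i j * V i j t)}) :
    (∀ x ∈ K, ∀ y ∈ K, x + y ∈ K) ∧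
    (∀ (c : ℝ), 0 < c → ∀ x ∈ K, c • x ∈ K) ∧
    IsClosed K ∧ (K ∩ (-K) ⊆ {0}) ∧ (interior K).Nonempty ∧
    (∀ x ∈ K, x ≠ 0 → A.mulVec x ∈ interior K) := by
  classical
  set i₀ : Fin k := ⟨0, hk⟩
  set q₀ : Σ i : Fin k, Fin (m i) := ⟨i₀, ⟨0, by omega⟩⟩
  have : Nonempty (Σ i : Fin k, Fin (m i)) := ⟨q₀⟩
  let B : Basis (Σ i : Fin k, Fin (m i)) ℂ (Fin d → ℂ) :=
    basisOfLinearIndependentOfCardEqFinrank hbasis (by simp [Fintype.card_sigma, hcard])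
  have hB : ∀ p, B p = V p.1 p.2 := fun p => by simp [B]
  have hτB := apply_sigmaMap_eq_star B V hB σ hσm hσV
  have hσi₀ : σ i₀ = i₀ := by
    by_contra h
    simpa [hσlam, hlam1, abs_of_pos hlam1pos] using hdom _ h
  have hτq₀ : Sigma.map σ (fun i => Fin.cast (hσm i).symm) q₀ = q₀ :=
    Sigma.ext hσi₀ ((Fin.heq_ext_iff (congrArg m hσi₀)).2 rfl)
  have hreal (x : Fin d → ℝ) : (realCoord B x q₀).im = 0 :=
    conj_eq_iff_im.1 (by rw [← realCoord_apply_of_map_star B hτB x q₀, hτq₀])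
  rw [vandergraftCone_eq_dominatedCone B V hB σ hσm hσV hm0] at hK
  subst hK
  exact ⟨fun _ hx _ hy => dominatedCone.add_mem hx hy,
    fun _ hc _ hx => dominatedCone.smul_mem hc.le hx,
    isClosed_dominatedCone (continuous_realCoord B),
    dominatedCone.inter_neg_subset (realCoord_injective B),
    interior_dominatedCone_nonempty B hreal (by rw [← hτB, hτq₀]),
    fun x hx hx0 => mulVec_mem_interior_dominatedCone B A lam hm0 hlam1 hlam1pos hε.le hε2
      (fun i j => by simpa only [hB] using hAV i j) hreal hx hx0⟩
end

section
/- For s ≥ 2 and any complex number z ≠ 0, if m is the integer with mπ/s ≤ arg z ≤ (m+1)π/s, then the Minkowski functional of the regular 2s-gon P_s with vertices at the 2s-th roots of unity satisfies ‖z‖_{P_s} = Re( (1 + ω_s^{−1}) / (1 + cos(π/s)) · ω_s^{−m} · z ), where ω_s = exp(iπ/s). -/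
/-!
On the sector `mθ ≤ arg z ≤ (m+1)θ`, `θ = π/s`, the point `z` is a nonnegative combination
`α ω^m + β ω^(m+1)` of two adjacent vertices. The real-linear functional
`ℓ w = Re (c ω^(-m) w)`, `c = (1 + ω⁻¹)/(1 + cos θ)`, equals `1` at both of these vertices
and is at most `1` at every vertex `ω^k`, since
`1 + cos θ - cos kθ - cos (k-1)θ = 4 sin (kθ/2) sin ((k-1)θ/2) cos (θ/2)` and the two
sines never have opposite signs. So `{ℓ = 1}` is a supporting line of `P_s` along the edge
`[ω^m, ω^(m+1)]`, which forces `‖z‖_{P_s} = α + β = ℓ z`.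
-/

open Complex

open Set Real Pointwise

section Gauge

variable {E : Type*} [AddCommGroup E] [Module ℝ E] {P : Set E}

theorem gauge_eq_of_mem_smul_of_le_one (f : E →ₗ[ℝ] ℝ) (hf : ∀ x ∈ P, f x ≤ 1) {z : E} {r : ℝ}
    (hr : 0 < r) (hz : z ∈ r • P) (hfz : f z = r) : gauge P z = r := by
  refine le_antisymm (gauge_le_of_mem hr.le hz) (le_csInf ⟨r, hr, hz⟩ ?_)
  rintro t ⟨ht, w, hw, rfl⟩
  calc r = t * f w := by rw [← hfz, map_smul, smul_eq_mul]
    _ ≤ t * 1 := mul_le_mul_of_nonneg_left (hf w hw) ht.le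
    _ = t := mul_one t

theorem gauge_smul_add_smul_eq_of_le_one (hP : Convex ℝ P) (f : E →ₗ[ℝ] ℝ)
    (hf : ∀ x ∈ P, f x ≤ 1) {u v : E} (hu : u ∈ P) (hv : v ∈ P) (hfu : f u = 1) (hfv : f v = 1)
    {α β : ℝ} (hα : 0 ≤ α) (hβ : 0 ≤ β) (hαβ : 0 < α + β) :
    gauge P (α • u + β • v) = f (α • u + β • v) := by
  have hf_eq : f (α • u + β • v) = α + β := by simp [hfu, hfv]
  rw [hf_eq]
  refine gauge_eq_of_mem_smul_of_le_one f hf hαβ ⟨(α / (α + β)) • u + (β / (α + β)) • v,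
    hP hu hv (by positivity) (by positivity) (by field_simp), ?_⟩ hf_eq
  simp only [smul_add, smul_smul]
  congr 2 <;> field_simp

end Gauge

namespace Real

theorem sin_mul_sin_nonneg_of_mem_Icc {x y : ℝ} (k : ℤ) (hx : x ∈ Icc (k * π) ((k + 1) * π))
    (hy : y ∈ Icc (k * π) ((k + 1) * π)) : 0 ≤ sin x * sin y := by
  have h := mul_nonneg
    (sin_nonneg_of_nonneg_of_le_pi (x := x - k * π) (by linarith [hx.1]) (by linarith [hx.2]))
    (sin_nonneg_of_nonneg_of_le_pi (x := y - k * π) (by linarith [hy.1]) (by linarith [hy.2]))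
  rwa [sin_sub_int_mul_pi, sin_sub_int_mul_pi, mul_mul_mul_comm, ← mul_zpow,
    neg_one_mul, neg_neg, one_zpow, one_mul] at h

theorem sin_int_mul_mul_sin_sub_one_mul_nonneg (n : ℕ) (hn : 0 < n) (j : ℤ) :
    0 ≤ sin (j * π / n) * sin ((j - 1) * π / n) := by
  set k := (j - 1) / n
  have hk₁ : k * n ≤ j - 1 := Int.ediv_mul_le _ (by omega)
  have hk₂ : j ≤ (k + 1) * n := by
    have := Int.lt_ediv_add_one_mul_self (j - 1) (b := n) (by omega)
    linarith
  have hnR : (0 : ℝ) < n := by exact_mod_cast hn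
  have hk₁' : (k : ℝ) * n ≤ j - 1 := by exact_mod_cast hk₁
  have hk₂' : (j : ℝ) ≤ (k + 1) * n := by exact_mod_cast hk₂
  apply sin_mul_sin_nonneg_of_mem_Icc k <;> constructor <;>
    first
    | rw [le_div_iff₀ hnR]; nlinarith [pi_pos]
    | rw [div_le_iff₀ hnR]; nlinarith [pi_pos]

theorem one_add_cos_two_mul_sub_cos_two_mul_sub_cos (x y : ℝ) :
    1 + cos (2 * y) - cos (2 * x) - cos (2 * x - 2 * y) = 4 * (sin x * sin (x - y)) * cos y := by
  rw [cos_sub, cos_two_mul, cos_two_mul, sin_two_mul, sin_two_mul, sin_sub]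
  linear_combination (-4 * cos y ^ 2) * sin_sq_add_cos_sq x

theorem cos_int_mul_add_cos_sub_one_mul_le (s : ℕ) (hs : 0 < s) (j : ℤ) :
    cos (j * (π / s)) + cos ((j - 1) * (π / s)) ≤ 1 + cos (π / s) := by
  have hθ : 0 ≤ π / s := by positivity
  have hθπ : π / s ≤ π := div_le_self pi_pos.le (by exact_mod_cast hs)
  have hcos : 0 ≤ cos (π / s / 2) := cos_nonneg_of_mem_Icc ⟨by linarith [pi_pos], by linarith⟩
  have key : 1 + cos (π / s) - cos (j * (π / s)) - cos ((j - 1) * (π / s)) =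
      4 * (sin (j * π / (2 * s : ℕ)) * sin ((j - 1) * π / (2 * s : ℕ))) * cos (π / s / 2) := by
    convert one_add_cos_two_mul_sub_cos_two_mul_sub_cos (j * π / (2 * s : ℕ)) (π / s / 2)
      using 3 <;> push_cast <;> ring_nf
  nlinarith [sin_int_mul_mul_sin_sub_one_mul_nonneg (2 * s) (by omega) j]

theorem one_add_cos_pi_div_pos {s : ℕ} (hs : 2 ≤ s) : 0 < 1 + cos (π / s) := by
  have hθ : π / s ≤ π / 2 := div_le_div_of_nonneg_left pi_pos.le two_pos (by exact_mod_cast hs)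
  have : 0 ≤ π / s := by positivity
  linarith [cos_nonneg_of_mem_Icc ⟨by linarith [pi_pos], hθ⟩]

end Real

namespace Complex

theorem exp_mul_I_zpow (θ : ℝ) (j : ℤ) : exp (θ * I) ^ j = exp (↑(j * θ) * I) := by
  rw [← exp_int_mul]
  push_cast
  ring_nf

theorem sin_mul_exp_mul_I (θ ψ : ℝ) :
    (Real.sin θ : ℂ) * exp (ψ * I) = Real.sin (θ - ψ) + Real.sin ψ * exp (θ * I) := by
  apply Complex.ext <;>
    simp only [add_re, add_im, mul_re, mul_im, ofReal_re, ofReal_im, exp_ofReal_mul_I_re,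
      exp_ofReal_mul_I_im, Real.sin_sub] <;> ring

theorem exists_nonneg_eq_smul_exp_zpow_add_smul {θ : ℝ} (hθ₀ : 0 < θ) (hθπ : θ < π) (z : ℂ)
    (m : ℤ) (h₁ : m * θ ≤ arg z) (h₂ : arg z ≤ (m + 1) * θ) :
    ∃ α β : ℝ, 0 ≤ α ∧ 0 ≤ β ∧ z = α • exp (θ * I) ^ m + β • exp (θ * I) ^ (m + 1) := by
  set ψ := arg z - m * θ with hψ
  have hsin : 0 < Real.sin θ := sin_pos_of_pos_of_lt_pi hθ₀ hθπ
  refine ⟨‖z‖ * Real.sin (θ - ψ) / Real.sin θ, ‖z‖ * Real.sin ψ / Real.sin θ,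
    by have := sin_nonneg_of_nonneg_of_le_pi (x := θ - ψ) (by linarith) (by linarith); positivity,
    by have := sin_nonneg_of_nonneg_of_le_pi (x := ψ) (by linarith) (by linarith); positivity, ?_⟩
  have hz : z = ‖z‖ * exp (θ * I) ^ m * exp (ψ * I) := by
    rw [exp_mul_I_zpow, mul_assoc, ← exp_add]
    conv_lhs => rw [← norm_mul_exp_arg_mul_I z]
    congr 2
    push_cast [hψ]
    ring
  have hexp : exp (ψ * I) = (Real.sin (θ - ψ) + Real.sin ψ * exp (θ * I)) / Real.sin θ :=
    eq_div_of_mul_eq (ofReal_ne_zero.mpr hsin.ne') (by rw [mul_comm, sin_mul_exp_mul_I])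
  conv_lhs => rw [hz, hexp]
  simp only [zpow_add_one₀ (exp_ne_zero _), real_smul, ofReal_div, ofReal_mul]
  ring

end Complex

theorem exp_mul_I_zpow_mem_regularPolygon (s : ℕ) (hs : 0 < s) (k : ℤ) :
    exp (↑(π / s) * I) ^ k ∈ regularPolygon s := by
  have h2s : (0 : ℤ) < 2 * s := by omega
  have hr₀ := Int.emod_nonneg k h2s.ne'
  have hr₁ := Int.emod_lt_of_pos k h2s
  refine subset_convexHull ℝ _ ⟨⟨(k % (2 * s)).toNat, by omega⟩, ?_⟩
  rw [exp_mul_I_zpow, exp_eq_exp_iff_exists_int]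
  refine ⟨k / (2 * s), ?_⟩
  have hk : (k : ℂ) = 2 * s * ↑(k / (2 * s)) + ↑(k % (2 * s)) := by
    exact_mod_cast (Int.mul_ediv_add_emod k (2 * s)).symm
  have hr : (((k % (2 * s)).toNat : ℕ) : ℂ) = ((k % (2 * s) : ℤ) : ℂ) := by
    rw [← Int.cast_natCast, Int.toNat_of_nonneg hr₀]
  have hsC : (s : ℂ) ≠ 0 := by exact_mod_cast hs.ne'
  simp only [hr]
  push_cast
  rw [hk]
  field_simp
  ring

noncomputable def edgeFunctional (θ : ℝ) (m : ℤ) : ℂ →ₗ[ℝ] ℝ :=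
  reLm ∘ₗ LinearMap.mulLeft ℝ
    ((1 + (exp (θ * I))⁻¹) / (1 + (Real.cos θ : ℂ)) * exp (θ * I) ^ (-m))

theorem edgeFunctional_apply (θ : ℝ) (m : ℤ) (w : ℂ) : edgeFunctional θ m w =
    ((1 + (exp (θ * I))⁻¹) / (1 + (Real.cos θ : ℂ)) * exp (θ * I) ^ (-m) * w).re :=
  rfl

theorem edgeFunctional_exp_mul_I_zpow (θ : ℝ) (m k : ℤ) :
    edgeFunctional θ m (exp (θ * I) ^ k) =
      (Real.cos ((k - m) * θ) + Real.cos ((k - m - 1) * θ)) / (1 + Real.cos θ) := by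
  have hω : exp (θ * I) ≠ 0 := exp_ne_zero _
  have h : (1 + (exp (θ * I))⁻¹) / (1 + (Real.cos θ : ℂ)) * exp (θ * I) ^ (-m) *
      exp (θ * I) ^ k =
      (exp (θ * I) ^ (k - m) + exp (θ * I) ^ (k - m - 1)) / ((1 + Real.cos θ : ℝ) : ℂ) := by
    rw [zpow_sub₀ hω, zpow_sub₀ hω, zpow_sub₀ hω, zpow_neg, zpow_one]
    push_cast
    ring
  rw [edgeFunctional_apply, h, div_ofReal_re, add_re, exp_mul_I_zpow, exp_mul_I_zpow,
    exp_ofReal_mul_I_re, exp_ofReal_mul_I_re]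
  push_cast
  ring_nf

theorem edgeFunctional_exp_mul_I_zpow_self {θ : ℝ} (hθ : 1 + Real.cos θ ≠ 0) (m : ℤ) :
    edgeFunctional θ m (exp (θ * I) ^ m) = 1 := by
  rw [edgeFunctional_exp_mul_I_zpow, div_eq_one_iff_eq hθ]
  simp

theorem edgeFunctional_exp_mul_I_zpow_add_one {θ : ℝ} (hθ : 1 + Real.cos θ ≠ 0) (m : ℤ) :
    edgeFunctional θ m (exp (θ * I) ^ (m + 1)) = 1 := by
  rw [edgeFunctional_exp_mul_I_zpow, div_eq_one_iff_eq hθ]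
  push_cast
  ring_nf
  simp [add_comm]

theorem edgeFunctional_le_one_of_mem_regularPolygon {s : ℕ} (hs : 2 ≤ s) (m : ℤ) {w : ℂ}
    (hw : w ∈ regularPolygon s) : edgeFunctional (π / s) m w ≤ 1 := by
  refine convexHull_min ?_ (convex_halfSpace_le (edgeFunctional (π / s) m).isLinear 1) hw
  rintro _ ⟨i, rfl⟩
  have hv : exp (↑π * I * (i : ℕ) / s) = exp (↑(π / s) * I) ^ ((i : ℕ) : ℤ) := by
    rw [exp_mul_I_zpow]
    push_cast
    ring_nf
  rw [mem_ofPred_eq, hv, edgeFunctional_exp_mul_I_zpow, div_le_one (one_add_cos_pi_div_pos hs)]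
  simpa using cos_int_mul_add_cos_sub_one_mul_le s (by omega) ((i : ℕ) - m)

/-- Explicit formula for the Minkowski functional of the regular `2s`-gon on
the sector `mπ/s ≤ arg z ≤ (m+1)π/s`. -/
theorem stmt_19 (s : ℕ) (hs : 2 ≤ s) (z : ℂ) (hz : z ≠ 0) (m : ℤ)
    (hm1 : (m : ℝ) * Real.pi / s ≤ z.arg)
    (hm2 : z.arg ≤ ((m : ℝ) + 1) * Real.pi / s) :
    gauge (regularPolygon s) z =
      ((1 + (Complex.exp (Real.pi * Complex.I / s))⁻¹) /
          (1 + (Real.cos (Real.pi / s) : ℂ)) *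
        (Complex.exp (Real.pi * Complex.I / s)) ^ (-m) * z).re := by
  have hs₀ : 0 < s := by omega
  have hθπ : π / s < π := div_lt_self pi_pos (by exact_mod_cast hs)
  have hcos : 1 + Real.cos (π / s) ≠ 0 := (one_add_cos_pi_div_pos hs).ne'
  obtain ⟨α, β, hα, hβ, rfl⟩ := exists_nonneg_eq_smul_exp_zpow_add_smul (by positivity) hθπ z m
    (by rwa [← mul_div_assoc]) (by rwa [← mul_div_assoc])
  have hαβ : 0 < α + β := by
    by_contra! h
    obtain rfl : α = 0 := by linarith
    obtain rfl : β = 0 := by linarith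
    simp at hz
  rw [show (π : ℂ) * I / s = ↑(π / s) * I by push_cast; ring, ← edgeFunctional_apply]
  exact gauge_smul_add_smul_eq_of_le_one (convex_convexHull ℝ _) _
    (fun _ => edgeFunctional_le_one_of_mem_regularPolygon hs m)
    (exp_mul_I_zpow_mem_regularPolygon s hs₀ m) (exp_mul_I_zpow_mem_regularPolygon s hs₀ (m + 1))
    (edgeFunctional_exp_mul_I_zpow_self hcos m) (edgeFunctional_exp_mul_I_zpow_add_one hcos m)
    hα hβ hαβ
end
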